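/- arXiv:2212.14080 — 10 statements merged into one kernel-verified Lean document; each statement's English description precedes it below -/
import Mathlib

section
/- For all real x, y with 0 ≤ x < 1, 0 ≤ y < 1 and x + y < 1, we have 1 − √(xy) − √((1−x)(1−y)) ≤ (√x − √y)² + √(xy)·(√x − √y)². -/
theorem stmt2 (x y : ℝ) (hx : 0 ≤ x) (hx1 : x < 1) (hy : 0 ≤ y) (hy1 : y < 1)
    (hxy : x + y < 1) :
    1 - Real.sqrt (x * y) - Real.sqrt ((1 - x) * (1 - y)) ≤
      (Real.sqrt x - Real.sqrt y) ^ 2 +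
        Real.sqrt (x * y) * (Real.sqrt x - Real.sqrt y) ^ 2 := by
  have ha := Real.sqrt_nonneg x
  have hb := Real.sqrt_nonneg y
  have ha2 : Real.sqrt x ^ 2 = x := Real.sq_sqrt hx
  have hb2 : Real.sqrt y ^ 2 = y := Real.sq_sqrt hy
  have hab : Real.sqrt (x * y) = Real.sqrt x * Real.sqrt y := Real.sqrt_mul hx y
  have hcnn : 0 ≤ (1 - x) * (1 - y) := mul_nonneg (by linarith) (by linarith)
  have hc : 0 ≤ Real.sqrt ((1 - x) * (1 - y)) := Real.sqrt_nonneg _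
  have hc2 : Real.sqrt ((1 - x) * (1 - y)) ^ 2 = (1 - x) * (1 - y) := Real.sq_sqrt hcnn
  set a := Real.sqrt x with hadef
  set b := Real.sqrt y with hbdef
  set c := Real.sqrt ((1 - x) * (1 - y)) with hcdef
  rw [hab]
  have hs : a ^ 2 + b ^ 2 < 1 := by rw [ha2, hb2]; linarith
  have habnn : 0 ≤ a * b := mul_nonneg ha hb
  have key : (1 - a * b - ((a - b) ^ 2 + a * b * (a - b) ^ 2)) ^ 2 ≤ c ^ 2 := by
    rw [hc2, ← ha2, ← hb2]
    nlinarith [mul_nonneg (mul_nonneg (sq_nonneg (a - b)) (by linarith : (0:ℝ) ≤ 1 - a ^ 2 - b ^ 2)) (sq_nonneg (1 + a * b)),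
      mul_nonneg (sq_nonneg (a - b)) (mul_nonneg (sq_nonneg (a * b)) (by linarith : (0:ℝ) ≤ 1 + 2 * (a * b)))]
  nlinarith [key, hc, sq_nonneg (c - (1 - a * b - ((a - b) ^ 2 + a * b * (a - b) ^ 2)))]
end

section
/- Let c > 0, s > 1, and y_n = e^{c n/(log n)^s}. Then lim_{n→∞} (y_n/log² y_n) / (y_{n+1}/log y_{n+1} − y_n/log y_n) = 0 and lim_{n→∞} (y_{n+1}/log² y_{n+1}) / (y_{n+1}/log y_{n+1} − y_n/log y_n) = 0. -/
open Real Filter Topology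

/-! Write `a = log yₙ = c n / (log n)^s` and `b = log yₙ₊₁`. From `e^(b-a) ≥ 1 + (b - a)` one gets
`e^b/b - e^a/a ≥ e^a (b - a) / (2b)` once `a ≥ 2`, so as long as `0 < b - a ≤ 1` both quotients are
`O(1 / (a (b - a)))`. The increment `b - a` lies between `c / (2 (log (n+1))^s)` and
`c / (log (n+1))^s`, hence `a (b - a) ≳ n / (log n)^(2s) → ∞`. -/

section ExpDiv

variable {a b : ℝ}

theorem exp_mul_sub_div_le_exp_div_sub_exp_div (ha : 2 ≤ a) (hab : a ≤ b) :
    exp a * (b - a) / (2 * b) ≤ exp b / b - exp a / a := by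
  have hb : 0 < b := by linarith
  have hexp : exp a * (1 + (b - a)) ≤ exp b := calc
    exp a * (1 + (b - a)) ≤ exp a * exp (b - a) := by
      gcongr; linarith [add_one_le_exp (b - a)]
    _ = exp b := by rw [← exp_add, add_sub_cancel]
  have hd : 0 ≤ exp a * (b - a) := mul_nonneg (exp_pos a).le (by linarith)
  calc exp a * (b - a) / (2 * b) ≤ exp a * (b - a) * (a - 1) / (a * b) := by
        rw [div_le_div_iff₀ (by positivity) (by positivity)]
        nlinarith [mul_nonneg (mul_nonneg hd hb.le) (by linarith : (0 : ℝ) ≤ a - 2)]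
    _ = exp a * (1 + (b - a)) / b - exp a / a := by field_simp; ring
    _ ≤ exp b / b - exp a / a := by gcongr

theorem exp_div_le_exp_div (ha : 2 ≤ a) (hab : 0 ≤ b - a) : exp a / a ≤ exp b / b := by
  have hb : 0 < b := by linarith
  exact sub_nonneg.1 ((div_nonneg (mul_nonneg (exp_pos a).le hab) (by linarith)).trans
    (exp_mul_sub_div_le_exp_div_sub_exp_div ha (by linarith)))

theorem exp_div_sq_div_sub_exp_div_le_left (ha : 2 ≤ a) (hab : 0 < b - a) (hab' : b - a ≤ 1) :
    (exp a / a ^ 2) / (exp b / b - exp a / a) ≤ 4 / (a * (b - a)) := by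
  have hb : 0 < b := by linarith
  calc (exp a / a ^ 2) / (exp b / b - exp a / a)
      ≤ (exp a / a ^ 2) / (exp a * (b - a) / (2 * b)) := by
        gcongr
        exact exp_mul_sub_div_le_exp_div_sub_exp_div ha (by linarith)
    _ = 2 * b / (a ^ 2 * (b - a)) := by field_simp
    _ ≤ 4 / (a * (b - a)) := by
        rw [div_le_div_iff₀ (by positivity) (by positivity)]
        nlinarith [mul_pos (mul_pos (by linarith : (0 : ℝ) < a) hab) hab]

theorem exp_div_sq_div_sub_exp_div_le_right (ha : 2 ≤ a) (hab : 0 < b - a) (hab' : b - a ≤ 1) :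
    (exp b / b ^ 2) / (exp b / b - exp a / a) ≤ 2 * exp 1 / (a * (b - a)) := by
  have hb : 0 < b := by linarith
  calc (exp b / b ^ 2) / (exp b / b - exp a / a)
      ≤ (exp b / b ^ 2) / (exp a * (b - a) / (2 * b)) := by
        gcongr
        exact exp_mul_sub_div_le_exp_div_sub_exp_div ha (by linarith)
    _ = 2 * exp (b - a) / (b * (b - a)) := by rw [exp_sub]; field_simp
    _ ≤ 2 * exp 1 / (a * (b - a)) := by gcongr; linarith

end ExpDiv

section Filter

variable {α : Type*} {l : Filter α} {a b : α → ℝ}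

theorem tendsto_atTop_of_tendsto_mul_sub (hab : ∀ᶠ x in l, b x - a x ∈ Set.Ioc 0 1)
    (h : Tendsto (fun x => a x * (b x - a x)) l atTop) : Tendsto a l atTop := by
  refine tendsto_atTop_mono' l ?_ h
  filter_upwards [hab, h.eventually_gt_atTop 0] with x ⟨hd, hd1⟩ hpos
  have ha : 0 < a x := pos_of_mul_pos_left hpos hd.le
  nlinarith

theorem tendsto_exp_div_sq_div_sub_exp_div_left (hab : ∀ᶠ x in l, b x - a x ∈ Set.Ioc 0 1)
    (h : Tendsto (fun x => a x * (b x - a x)) l atTop) :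
    Tendsto (fun x => (exp (a x) / a x ^ 2) / (exp (b x) / b x - exp (a x) / a x)) l (𝓝 0) := by
  have h2 := (tendsto_atTop_of_tendsto_mul_sub hab h).eventually_ge_atTop 2
  refine squeeze_zero' ?_ ?_ (h.const_div_atTop 4)
  · filter_upwards [hab, h2] with x ⟨hd, _⟩ ha
    have hb : 0 < b x := by linarith
    exact div_nonneg (by positivity) (sub_nonneg.2 (exp_div_le_exp_div ha hd.le))
  · filter_upwards [hab, h2] with x ⟨hd, hd1⟩ ha
    exact exp_div_sq_div_sub_exp_div_le_left ha hd hd1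

theorem tendsto_exp_div_sq_div_sub_exp_div_right (hab : ∀ᶠ x in l, b x - a x ∈ Set.Ioc 0 1)
    (h : Tendsto (fun x => a x * (b x - a x)) l atTop) :
    Tendsto (fun x => (exp (b x) / b x ^ 2) / (exp (b x) / b x - exp (a x) / a x)) l (𝓝 0) := by
  have h2 := (tendsto_atTop_of_tendsto_mul_sub hab h).eventually_ge_atTop 2
  refine squeeze_zero' ?_ ?_ (h.const_div_atTop (2 * exp 1))
  · filter_upwards [hab, h2] with x ⟨hd, _⟩ ha
    have hb : 0 < b x := by linarith
    exact div_nonneg (by positivity) (sub_nonneg.2 (exp_div_le_exp_div ha hd.le))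
  · filter_upwards [hab, h2] with x ⟨hd, hd1⟩ ha
    exact exp_div_sq_div_sub_exp_div_le_right ha hd hd1

end Filter

section LogRpow

variable {c s x : ℝ}

theorem log_add_one_sub_log_le (hx : 0 < x) : log (x + 1) - log x ≤ x⁻¹ := by
  rw [← log_div (by positivity) hx.ne']
  calc log ((x + 1) / x) ≤ (x + 1) / x - 1 := log_le_sub_one_of_pos (by positivity)
    _ = x⁻¹ := by field_simp; ring

theorem log_add_one_div_log_rpow_le (hs : 0 < s) (hx : 0 < x) (hL : 4 * s ≤ log x) :
    (log (x + 1) / log x) ^ s ≤ 1 + (2 * x)⁻¹ := by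
  have hL0 : 0 < log x := by linarith
  have hx1 : 1 < x := (log_pos_iff hx.le).1 hL0
  have hq : 0 < log (x + 1) / log x := div_pos (log_pos (by linarith)) hL0
  have ht : log (log (x + 1) / log x) * s ≤ (4 * x)⁻¹ := calc
    log (log (x + 1) / log x) * s ≤ (log (x + 1) / log x - 1) * s := by
      gcongr; exact log_le_sub_one_of_pos hq
    _ = (log (x + 1) - log x) / log x * s := by field_simp
    _ ≤ x⁻¹ / log x * s := by gcongr; exact log_add_one_sub_log_le hx
    _ ≤ (4 * x)⁻¹ := by
      rw [div_mul_eq_mul_div, div_le_iff₀ hL0]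
      calc x⁻¹ * s = (4 * x)⁻¹ * (4 * s) := by field_simp
        _ ≤ (4 * x)⁻¹ * log x := by gcongr
  have hexp : exp (4 * x)⁻¹ ≤ 1 + (2 * x)⁻¹ := by
    have h := abs_exp_sub_one_le (x := (4 * x)⁻¹) (by
      rw [abs_of_pos (by positivity)]; exact inv_le_one_of_one_le₀ (by linarith))
    rw [abs_of_pos (by positivity : 0 < (4 * x)⁻¹)] at h
    have : 2 * (4 * x)⁻¹ = (2 * x)⁻¹ := by field_simp; ring
    linarith [le_abs_self (exp (4 * x)⁻¹ - 1)]
  calc (log (x + 1) / log x) ^ s = exp (log (log (x + 1) / log x) * s) := rpow_def_of_pos hq s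
    _ ≤ exp (4 * x)⁻¹ := exp_le_exp.2 ht
    _ ≤ 1 + (2 * x)⁻¹ := hexp

theorem div_two_mul_log_rpow_le_sub (hc : 0 ≤ c) (hs : 0 < s) (hx : 0 < x) (hL : 4 * s ≤ log x) :
    c / (2 * log (x + 1) ^ s) ≤ c * (x + 1) / log (x + 1) ^ s - c * x / log x ^ s := by
  have hL0 : 0 < log x := by linarith
  have hL0' : 0 < log (x + 1) := hL0.trans_le (log_le_log hx (by linarith))
  have hP : 0 < log x ^ s := rpow_pos_of_pos hL0 s
  have hP' : 0 < log (x + 1) ^ s := rpow_pos_of_pos hL0' s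
  have h := log_add_one_div_log_rpow_le hs hx hL
  rw [div_rpow hL0'.le hL0.le, div_le_iff₀ hP] at h
  have hxP : 2 * x * log (x + 1) ^ s ≤ (2 * x + 1) * log x ^ s := by
    calc 2 * x * log (x + 1) ^ s ≤ 2 * x * ((1 + (2 * x)⁻¹) * log x ^ s) := by gcongr
      _ = (2 * x + 1) * log x ^ s := by field_simp
  rw [div_sub_div _ _ hP'.ne' hP.ne', div_le_div_iff₀ (by positivity) (by positivity)]
  nlinarith [mul_le_mul_of_nonneg_left hxP (mul_nonneg hc hP'.le)]

theorem sub_le_div_log_rpow (hc : 0 ≤ c) (hs : 0 ≤ s) (hx : 1 < x) :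
    c * (x + 1) / log (x + 1) ^ s - c * x / log x ^ s ≤ c / log (x + 1) ^ s := by
  have hL0 : 0 < log x := log_pos hx
  have hcx : 0 ≤ c * x := mul_nonneg hc (by linarith)
  calc c * (x + 1) / log (x + 1) ^ s - c * x / log x ^ s
      ≤ c * (x + 1) / log (x + 1) ^ s - c * x / log (x + 1) ^ s := by gcongr; linarith
    _ = c / log (x + 1) ^ s := by ring

theorem eventually_sub_div_log_rpow_mem_Ioc (hc : 0 < c) (hs : 0 < s) :
    ∀ᶠ x in atTop, c * (x + 1) / log (x + 1) ^ s - c * x / log x ^ s ∈ Set.Ioc 0 1 := by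
  have hP' : Tendsto (fun x => log (x + 1) ^ s) atTop atTop :=
    (tendsto_rpow_atTop hs).comp
      (tendsto_log_atTop.comp (tendsto_atTop_add_const_right _ 1 tendsto_id))
  filter_upwards [eventually_gt_atTop 1, tendsto_log_atTop.eventually_ge_atTop (4 * s),
    hP'.eventually_ge_atTop c] with x hx hL hcP
  have hP'pos : 0 < log (x + 1) ^ s := hc.trans_le hcP
  exact ⟨(by positivity : 0 < c / (2 * log (x + 1) ^ s)).trans_le
      (div_two_mul_log_rpow_le_sub hc.le hs (by linarith) hL),
    (sub_le_div_log_rpow hc.le hs.le hx).trans ((div_le_one hP'pos).2 hcP)⟩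

theorem tendsto_div_log_rpow_atTop (r : ℝ) : Tendsto (fun x => x / log x ^ r) atTop atTop := by
  have h := (isLittleO_log_rpow_rpow_atTop r one_pos).tendsto_div_nhds_zero
  have hpos : ∀ᶠ x in atTop, 0 < log x ^ r / x ^ (1 : ℝ) := by
    filter_upwards [eventually_gt_atTop 1] with x hx
    have := log_pos hx
    positivity
  refine (tendsto_nhdsWithin_iff.2 ⟨h, hpos⟩).inv_tendsto_nhdsGT_zero.congr fun x => ?_
  simp [rpow_one]

theorem tendsto_div_log_rpow_mul_sub_atTop (hc : 0 < c) (hs : 0 < s) :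
    Tendsto (fun x => c * x / log x ^ s * (c * (x + 1) / log (x + 1) ^ s - c * x / log x ^ s))
      atTop atTop := by
  have h := ((tendsto_div_log_rpow_atTop (2 * s)).comp
    (tendsto_atTop_add_const_right _ 1 tendsto_id)).const_mul_atTop
      (by positivity : 0 < c ^ 2 / 4)
  refine tendsto_atTop_mono' _ ?_ h
  filter_upwards [eventually_gt_atTop 1, tendsto_log_atTop.eventually_ge_atTop (4 * s)]
    with x hx hL
  have hL0 : 0 < log x := log_pos hx
  have hL0' : 0 < log (x + 1) := log_pos (by linarith)
  calc c ^ 2 / 4 * ((x + 1) / log (x + 1) ^ (2 * s))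
      = c * ((x + 1) / 2) / log (x + 1) ^ s * (c / (2 * log (x + 1) ^ s)) := by
        rw [two_mul s, rpow_add hL0']; field_simp; ring
    _ ≤ c * x / log x ^ s * (c / (2 * log (x + 1) ^ s)) := by
        gcongr <;> linarith
    _ ≤ c * x / log x ^ s * (c * (x + 1) / log (x + 1) ^ s - c * x / log x ^ s) := by
        gcongr
        exact div_two_mul_log_rpow_le_sub hc.le hs (by linarith) hL

end LogRpow

theorem stmt6 (c s : ℝ) (hc : 0 < c) (hs : 1 < s) :
    (Tendsto
      (fun n : ℕ =>
        (Real.exp (c * n / Real.log n ^ s) / Real.log (Real.exp (c * n / Real.log n ^ s)) ^ 2)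
        / (Real.exp (c * (n + 1) / Real.log (n + 1) ^ s)
              / Real.log (Real.exp (c * (n + 1) / Real.log (n + 1) ^ s))
            - Real.exp (c * n / Real.log n ^ s)
              / Real.log (Real.exp (c * n / Real.log n ^ s))))
      atTop (nhds 0)) ∧
    (Tendsto
      (fun n : ℕ =>
        (Real.exp (c * (n + 1) / Real.log (n + 1) ^ s)
            / Real.log (Real.exp (c * (n + 1) / Real.log (n + 1) ^ s)) ^ 2)
        / (Real.exp (c * (n + 1) / Real.log (n + 1) ^ s)
              / Real.log (Real.exp (c * (n + 1) / Real.log (n + 1) ^ s))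
            - Real.exp (c * n / Real.log n ^ s)
              / Real.log (Real.exp (c * n / Real.log n ^ s))))
      atTop (nhds 0)) := by
  simp only [Real.log_exp]
  have hs0 : 0 < s := by linarith
  have hab := tendsto_natCast_atTop_atTop.eventually (eventually_sub_div_log_rpow_mem_Ioc hc hs0)
  have h := (tendsto_div_log_rpow_mul_sub_atTop hc hs0).comp tendsto_natCast_atTop_atTop
  exact ⟨tendsto_exp_div_sq_div_sub_exp_div_left (a := fun n : ℕ => c * n / log n ^ s)
      (b := fun n : ℕ => c * (n + 1) / log (n + 1) ^ s) hab h,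
    tendsto_exp_div_sq_div_sub_exp_div_right (a := fun n : ℕ => c * n / log n ^ s)
      (b := fun n : ℕ => c * (n + 1) / log (n + 1) ^ s) hab h⟩
end

section
/- Let c > 0, s > 1, and y_n = e^{c n/(log n)^s}. Then (y_{n+1}/log y_{n+1} − y_n/log y_n) is asymptotically equivalent to c·y_n / ((log y_n)·(log log y_n)^s) as n → ∞. -/
/-!
Write `F x = c x / (log x)^s`, so that `y_n = exp (F n)` and `log y_n = F n`. For `φ t = eᵗ / t`
we have `φ' / φ = 1 - 1/t → 1`, so when `F n → ∞` and the increment `D n = F (n+1) - F n → 0`,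
`φ (F (n+1)) - φ (F n) ∼ D n · φ (F n)`. Writing `r = log n / log (n+1)`,
`D n · (log n)^s = c n (r^s - 1) + c r^s`, and `n (r^s - 1) → 0` because `r^s - 1 ∼ s (r - 1)` and
`n (r - 1) ∼ -1 / log n`; hence `D n ∼ c / (log n)^s`. Finally `log (F n) ∼ log n`.
-/

open Real Filter Topology

theorem HasDerivAt.tendsto_slope_comp {𝕜 α : Type*} [NontriviallyNormedField 𝕜]
    {f : 𝕜 → 𝕜} {f' a : 𝕜} (hf : HasDerivAt f f' a) {l : Filter α} {u : α → 𝕜}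
    (hu : Tendsto u l (𝓝 a)) (hne : ∀ᶠ x in l, u x ≠ a) :
    Tendsto (fun x => (f (u x) - f a) / (u x - a)) l (𝓝 f') := by
  have hu' : Tendsto u l (𝓝[≠] a) := tendsto_nhdsWithin_iff.mpr ⟨hu, hne⟩
  simpa only [Function.comp_def, slope_def_field] using hf.tendsto_slope.comp hu'

lemma tendsto_mul_log_div_log_add_one_sub_one :
    Tendsto (fun x : ℝ => x * (log x / log (x + 1) - 1)) atTop (𝓝 0) := by
  have hlog : Tendsto (fun x : ℝ => log (x + 1)) atTop atTop :=
    tendsto_log_atTop.comp (tendsto_atTop_add_const_right _ 1 tendsto_id)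
  have h := ((tendsto_mul_log_one_add_div_atTop 1).mul hlog.inv_tendsto_atTop).neg
  rw [mul_zero, neg_zero] at h
  refine h.congr' ?_
  filter_upwards [eventually_gt_atTop 0] with x hx
  have hlog_pos : 0 < log (x + 1) := log_pos (by linarith)
  have hsplit : log (1 + 1 / x) = log (x + 1) - log x := by
    rw [← log_div (by positivity) hx.ne']
    congr 1
    field_simp
  simp only [Pi.inv_apply]
  rw [hsplit]
  field_simp
  ring

lemma tendsto_log_div_log_add_one :
    Tendsto (fun x : ℝ => log x / log (x + 1)) atTop (𝓝 1) := by
  have h := tendsto_mul_log_div_log_add_one_sub_one.mul tendsto_inv_atTop_zero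
  rw [mul_zero] at h
  have h' : Tendsto (fun x : ℝ => log x / log (x + 1) - 1 + 1) atTop (𝓝 (0 + 1)) := by
    refine (h.congr' ?_).add_const 1
    filter_upwards [eventually_gt_atTop 0] with x hx
    field_simp
  simpa using h'

lemma eventually_log_div_log_add_one_lt_one :
    ∀ᶠ x : ℝ in atTop, log x / log (x + 1) < 1 := by
  filter_upwards [eventually_gt_atTop 0] with x hx
  rw [div_lt_one (log_pos (by linarith))]
  exact log_lt_log hx (by linarith)

lemma tendsto_mul_log_div_log_add_one_rpow_sub_one (s : ℝ) :
    Tendsto (fun x : ℝ => x * ((log x / log (x + 1)) ^ s - 1)) atTop (𝓝 0) := by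
  have hderiv : HasDerivAt (fun r : ℝ => r ^ s) s 1 := by
    simpa using hasDerivAt_rpow_const (x := 1) (p := s) (Or.inl one_ne_zero)
  have hslope := hderiv.tendsto_slope_comp tendsto_log_div_log_add_one
    (eventually_log_div_log_add_one_lt_one.mono fun _ h => h.ne)
  have h := hslope.mul tendsto_mul_log_div_log_add_one_sub_one
  rw [mul_zero] at h
  refine h.congr' ?_
  filter_upwards [eventually_log_div_log_add_one_lt_one] with x hx
  rw [one_rpow]
  field_simp [sub_ne_zero.mpr hx.ne]

lemma tendsto_sub_mul_log_rpow (c s : ℝ) :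
    Tendsto (fun x : ℝ => (c * (x + 1) / log (x + 1) ^ s - c * x / log x ^ s) * log x ^ s)
      atTop (𝓝 c) := by
  have hr : Tendsto (fun x : ℝ => (log x / log (x + 1)) ^ s) atTop (𝓝 1) := by
    simpa using tendsto_log_div_log_add_one.rpow_const (p := s) (Or.inl one_ne_zero)
  have h := ((tendsto_mul_log_div_log_add_one_rpow_sub_one s).add hr).const_mul c
  rw [zero_add, mul_one] at h
  refine h.congr' ?_
  filter_upwards [eventually_gt_atTop 1] with x hx
  have hL : 0 < log x := log_pos hx
  have hL1 : 0 < log (x + 1) := log_pos (by linarith)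
  rw [div_rpow hL.le hL1.le]
  have := (rpow_pos_of_pos hL s).ne'
  have := (rpow_pos_of_pos hL1 s).ne'
  field_simp
  ring

lemma tendsto_sub_div_log_rpow {s : ℝ} (c : ℝ) (hs : 0 < s) :
    Tendsto (fun x : ℝ => c * (x + 1) / log (x + 1) ^ s - c * x / log x ^ s) atTop (𝓝 0) := by
  have hlog : Tendsto (fun x : ℝ => log x ^ s) atTop atTop :=
    (tendsto_rpow_atTop hs).comp tendsto_log_atTop
  have h := (tendsto_sub_mul_log_rpow c s).mul hlog.inv_tendsto_atTop
  rw [mul_zero] at h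
  refine h.congr' ?_
  filter_upwards [hlog.eventually_gt_atTop 0] with x hx
  simp only [Pi.inv_apply]
  field_simp

lemma tendsto_mul_div_log_rpow_atTop {c : ℝ} (hc : 0 < c) (s : ℝ) :
    Tendsto (fun x : ℝ => c * x / log x ^ s) atTop atTop := by
  have h : Tendsto (fun x : ℝ => log x ^ s / x) atTop (𝓝[>] 0) := by
    refine tendsto_nhdsWithin_iff.mpr ⟨?_, ?_⟩
    · simpa using (isLittleO_log_rpow_rpow_atTop s one_pos).tendsto_div_nhds_zero
    · filter_upwards [eventually_gt_atTop 1] with x hx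
      exact div_pos (rpow_pos_of_pos (log_pos hx) s) (by linarith)
  refine ((tendsto_inv_nhdsGT_zero.comp h).const_mul_atTop hc).congr fun x => ?_
  simp only [Function.comp_apply, inv_div, mul_div_assoc]

lemma tendsto_log_mul_div_log_rpow_div_log {c : ℝ} (hc : c ≠ 0) (s : ℝ) :
    Tendsto (fun x : ℝ => log (c * x / log x ^ s) / log x) atTop (𝓝 1) := by
  have hlog_inv : Tendsto (fun x : ℝ => (log x)⁻¹) atTop (𝓝 0) :=
    tendsto_log_atTop.inv_tendsto_atTop
  have hloglog : Tendsto (fun x : ℝ => log (log x) / log x) atTop (𝓝 0) :=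
    isLittleO_log_id_atTop.tendsto_div_nhds_zero.comp tendsto_log_atTop
  have h := ((hlog_inv.const_mul (log c)).add_const 1).sub (hloglog.const_mul s)
  rw [mul_zero, mul_zero, zero_add, sub_zero] at h
  refine h.congr' ?_
  filter_upwards [eventually_gt_atTop 1] with x hx
  have hL : 0 < log x := log_pos hx
  rw [log_div (by simp [hc, (zero_lt_one.trans hx).ne']) (rpow_pos_of_pos hL s).ne',
    log_mul hc (by linarith), log_rpow hL]
  field_simp

theorem tendsto_exp_div_self_sub_exp_div_self_div {α : Type*} {l : Filter α} {F G : α → ℝ}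
    (hF : Tendsto F l atTop) (hGF : Tendsto (fun x => G x - F x) l (𝓝 0))
    (hGF_ne : ∀ᶠ x in l, G x - F x ≠ 0) :
    Tendsto (fun x => (exp (G x) / G x - exp (F x) / F x) / ((G x - F x) * exp (F x) / F x))
      l (𝓝 1) := by
  have hexp := (hasDerivAt_exp 0).tendsto_slope_comp hGF (hGF_ne.mono fun _ h => h)
  have hFinv : Tendsto (fun x => (F x)⁻¹) l (𝓝 0) := hF.inv_tendsto_atTop
  have hquot : Tendsto (fun x => (1 + (G x - F x) * (F x)⁻¹)⁻¹) l (𝓝 1) := by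
    simpa using ((hGF.mul hFinv).const_add 1).inv₀ (by norm_num)
  have hG : Tendsto G l atTop := (hF.atTop_add hGF).congr fun x => add_sub_cancel (F x) (G x)
  have h := (hexp.sub hFinv).mul hquot
  rw [exp_zero, sub_zero, one_mul] at h
  refine h.congr' ?_
  filter_upwards [hGF_ne, hF.eventually_gt_atTop 0, hG.eventually_gt_atTop 0] with x hne hF0 hG0
  have hGF_div : 1 + (G x - F x) * (F x)⁻¹ = G x / F x := by field_simp; ring
  rw [sub_zero, exp_sub, hGF_div]
  field_simp
  ring

theorem stmt7 (c s : ℝ) (hc : 0 < c) (hs : 1 < s) :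
    Tendsto
      (fun n : ℕ =>
        (Real.exp (c * (n + 1) / Real.log (n + 1) ^ s)
              / Real.log (Real.exp (c * (n + 1) / Real.log (n + 1) ^ s))
            - Real.exp (c * n / Real.log n ^ s)
              / Real.log (Real.exp (c * n / Real.log n ^ s)))
        / (c * Real.exp (c * n / Real.log n ^ s)
            / (Real.log (Real.exp (c * n / Real.log n ^ s))
                * Real.log (Real.log (Real.exp (c * n / Real.log n ^ s))) ^ s)))
      atTop (nhds 1) := by
  set F : ℕ → ℝ := fun n => c * n / log n ^ s
  set G : ℕ → ℝ := fun n => c * (n + 1) / log (n + 1) ^ s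
  have hnat := tendsto_natCast_atTop_atTop (R := ℝ)
  have hF : Tendsto F atTop atTop := (tendsto_mul_div_log_rpow_atTop hc s).comp hnat
  have hGF_log : Tendsto (fun n : ℕ => (G n - F n) * log n ^ s) atTop (𝓝 c) :=
    (tendsto_sub_mul_log_rpow c s).comp hnat
  have hGF : Tendsto (fun n => G n - F n) atTop (𝓝 0) :=
    (tendsto_sub_div_log_rpow c (zero_lt_one.trans hs)).comp hnat
  have hGF_ne : ∀ᶠ n in atTop, G n - F n ≠ 0 :=
    (hGF_log.eventually_ne hc.ne').mono fun _ h => left_ne_zero_of_mul h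
  have hlogF : Tendsto (fun n : ℕ => (log (F n) / log n) ^ s) atTop (𝓝 1) := by
    simpa using ((tendsto_log_mul_div_log_rpow_div_log hc.ne' s).comp hnat).rpow_const
      (p := s) (Or.inl one_ne_zero)
  have h := ((tendsto_exp_div_self_sub_exp_div_self_div hF hGF hGF_ne).mul
    (hGF_log.div_const c)).mul hlogF
  rw [div_self hc.ne', one_mul, one_mul] at h
  refine h.congr' ?_
  filter_upwards [hGF_ne, hF.eventually_gt_atTop 1, eventually_gt_atTop 1] with n hGF_n hF1 hn
  have hL : 0 < log (n : ℝ) := log_pos (by exact_mod_cast hn)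
  have hLF : 0 < log (F n) := log_pos hF1
  show _ = (exp (G n) / log (exp (G n)) - exp (F n) / log (exp (F n)))
    / (c * exp (F n) / (log (exp (F n)) * log (log (exp (F n))) ^ s))
  clear_value F G
  simp only [log_exp]
  rw [div_rpow hLF.le hL.le]
  have := (rpow_pos_of_pos hL s).ne'
  have := (rpow_pos_of_pos hLF s).ne'
  field_simp [hGF_n]
end

section
/- Let {p_k} and {a_k} be sequences of nonnegative reals with ∑_k 1/p_k = ∞ and a_k → ∞, and let h : [0,1] → (0,∞) satisfy h(t) ≥ min(h(c), h(1−c)) > 0 for every 0 ≤ c < 1/2 and every t ∈ [c, 1−c]. Then the set S = {t ∈ ℝ : ∑_k h({t·a_k})/p_k < ∞} has Lebesgue measure zero, where {x} denotes the fractional part of x. -/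
/-!
Fix `M` and `0 < c < 1/2`, and let `G k` be the set of `t` with `{t a_k} ∈ [c, 1 - c]`.
Once `a_k ≥ 1`, the part of `[-M, M]` outside `G k` lies within `c / a_k` of the points
`j / a_k`, so it has measure `O(M c)`. Since `h ≥ min (h c) (h (1 - c)) > 0` on `[c, 1 - c]`,
every `t ∈ S` has `∑ 1_{G k}(t) / p_k < ∞`. On a set `U ⊆ [-M, M]` where this sum is at most
`n`, integrating gives `n |U| ≥ ∑ |U ∩ G k| / p_k`, which is infinite as soon as `|U|` exceeds
the `O(M c)` bound, because `∑ 1 / p_k = ∞`. Hence `|S ∩ [-M, M]| = O(M c)` for every `c`.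
-/

open Real Filter MeasureTheory Set Topology
open scoped ENNReal NNReal

theorem ENNReal.tsum_coe_mul_eq_top_of_eventually_le {w : ℕ → ℝ≥0} (hw : ¬ Summable w)
    {b : ℕ → ℝ≥0∞} {δ : ℝ≥0∞} (hδ : δ ≠ 0) (hb : ∀ᶠ k in atTop, δ ≤ b k) :
    ∑' k, (w k : ℝ≥0∞) * b k = ∞ := by
  obtain ⟨K, hK⟩ := eventually_atTop.mp hb
  have htail : ∑' k, (w (k + K) : ℝ≥0∞) = ∞ := by
    by_contra hfin
    exact hw ((NNReal.summable_nat_add_iff K).mp (ENNReal.tsum_coe_ne_top_iff_summable.mp hfin))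
  refine top_le_iff.mp ?_
  calc ∞ = (∑' k, (w (k + K) : ℝ≥0∞)) * δ := by rw [htail, ENNReal.top_mul hδ]
    _ = ∑' k, (w (k + K) : ℝ≥0∞) * δ := ENNReal.tsum_mul_right.symm
    _ ≤ ∑' k, (w (k + K) : ℝ≥0∞) * b (k + K) :=
      ENNReal.tsum_le_tsum fun k => by gcongr; exact hK _ (Nat.le_add_left K k)
    _ ≤ ∑' k, (w k : ℝ≥0∞) * b k :=
      ENNReal.tsum_comp_le_tsum_of_injective (add_left_injective K) fun k => (w k : ℝ≥0∞) * b k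

section

variable {α : Type*} [MeasurableSpace α] {μ : Measure α} {G : ℕ → Set α} {w : ℕ → ℝ≥0}

theorem measure_le_of_tsum_indicator_le (hG : ∀ k, MeasurableSet (G k)) (hw : ¬ Summable w)
    {U : Set α} (hU : MeasurableSet U) (hUfin : μ U ≠ ∞) {B n : ℝ≥0∞}
    (hB : ∀ᶠ k in atTop, μ (U \ G k) ≤ B) (hn : n ≠ ∞)
    (hbdd : ∀ t ∈ U, ∑' k, (G k).indicator (fun _ => (w k : ℝ≥0∞)) t ≤ n) :
    μ U ≤ B := by
  by_contra! hBU
  have hinter : ∀ᶠ k in atTop, μ U - B ≤ μ (G k ∩ U) := hB.mono fun k hk =>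
    inter_comm U (G k) ▸ tsub_le_iff_right.mpr
      ((measure_le_inter_add_sdiff μ U (G k)).trans (add_le_add_right hk _))
  have hint : ∫⁻ t in U, ∑' k, (G k).indicator (fun _ => (w k : ℝ≥0∞)) t ∂μ = ∞ := by
    rw [lintegral_tsum fun k => (measurable_const.indicator (hG k)).aemeasurable]
    simp_rw [lintegral_indicator (hG _), setLIntegral_const, Measure.restrict_apply (hG _)]
    exact ENNReal.tsum_coe_mul_eq_top_of_eventually_le hw (tsub_pos_of_lt hBU).ne' hinter
  have hle : ∫⁻ t in U, ∑' k, (G k).indicator (fun _ => (w k : ℝ≥0∞)) t ∂μ ≤ n * μ U :=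
    (setLIntegral_mono' hU hbdd).trans_eq (setLIntegral_const U n)
  exact ENNReal.mul_ne_top hn hUfin (top_le_iff.mp (hint ▸ hle))

theorem measure_inter_setOf_summable_indicator_le (hG : ∀ k, MeasurableSet (G k))
    (hw : ¬ Summable w) {E : Set α} (hE : MeasurableSet E) (hEfin : μ E ≠ ∞) {B : ℝ≥0∞}
    (hB : ∀ᶠ k in atTop, μ (E \ G k) ≤ B) :
    μ (E ∩ {t | Summable fun k => (G k).indicator (fun _ => w k) t}) ≤ B := by
  set f : α → ℝ≥0∞ := fun t => ∑' k, (G k).indicator (fun _ => (w k : ℝ≥0∞)) t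
  have hf : Measurable f := Measurable.tsum fun k => measurable_const.indicator (hG k)
  have hcover : E ∩ {t | Summable fun k => (G k).indicator (fun _ => w k) t} ⊆
      ⋃ n : ℕ, E ∩ {t | f t ≤ n} := by
    rintro t ⟨htE, hsum⟩
    have hfin : f t ≠ ∞ := by
      simpa only [f, ENNReal.coe_indicator] using ENNReal.tsum_coe_ne_top_iff_summable.mpr hsum
    obtain ⟨n, hn⟩ := ENNReal.exists_nat_gt hfin
    exact mem_iUnion.mpr ⟨n, htE, hn.le⟩
  have hmono : Monotone fun n : ℕ => E ∩ {t | f t ≤ n} := fun i j hij =>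
    inter_subset_inter_right _ fun t (ht : f t ≤ i) => ht.trans (Nat.cast_le.mpr hij)
  calc _ ≤ μ (⋃ n : ℕ, E ∩ {t | f t ≤ n}) := measure_mono hcover
    _ = ⨆ n : ℕ, μ (E ∩ {t | f t ≤ n}) := hmono.measure_iUnion
    _ ≤ B := iSup_le fun n =>
      measure_le_of_tsum_indicator_le hG hw (hE.inter (hf measurableSet_Iic))
        (measure_ne_top_of_subset inter_subset_left hEfin)
        (hB.mono fun k hk => (measure_mono (sdiff_subset_sdiff_left inter_subset_left)).trans hk)
        (ENNReal.natCast_ne_top n) fun t ht => ht.2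

end

theorem volume_Icc_diff_setOf_fract_mul_mem_Icc_le {M A c : ℝ} (hM : 0 ≤ M) (hA : 1 ≤ A)
    (hc : 0 ≤ c) :
    volume (Icc (-M) M \ {t | Int.fract (t * A) ∈ Icc c (1 - c)}) ≤
      ENNReal.ofReal ((4 * M + 6) * c) := by
  have hA0 : 0 < A := by linarith
  set N := ⌈M * A⌉₊
  have hcover : Icc (-M) M \ {t | Int.fract (t * A) ∈ Icc c (1 - c)} ⊆
      ⋃ j ∈ Finset.Icc (-(N : ℤ)) N, Icc ((j - c) / A) ((j + c) / A) := by
    rintro t ⟨⟨htl, htr⟩, hfract⟩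
    have hround : |t * A - round (t * A)| < c := by
      rw [abs_sub_round_eq_min]
      simp only [mem_ofPred_eq, mem_Icc, not_and_or, not_le] at hfract
      rcases hfract with h | h
      · exact min_lt_of_left_lt h
      · exact min_lt_of_right_lt (by linarith)
    have hhalf := abs_le.mp (abs_sub_round (t * A))
    have htA : t * A ≤ M * A := mul_le_mul_of_nonneg_right htr hA0.le
    have htA' : -M * A ≤ t * A := mul_le_mul_of_nonneg_right htl hA0.le
    have hN : M * A ≤ N := Nat.le_ceil _
    refine mem_iUnion₂.mpr ⟨round (t * A), Finset.mem_Icc.mpr ⟨?_, ?_⟩, ?_⟩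
    · have : (-(N : ℤ) : ℝ) - 1 < round (t * A) := by push_cast; linarith
      exact_mod_cast Int.sub_one_lt_iff.mp (by exact_mod_cast this)
    · have : (round (t * A) : ℝ) < (N : ℤ) + 1 := by push_cast; linarith
      exact Int.lt_add_one_iff.mp (by exact_mod_cast this)
    · obtain ⟨hl, hr⟩ := abs_lt.mp hround
      constructor
      · rw [div_le_iff₀ hA0]; linarith
      · rw [le_div_iff₀ hA0]; linarith
  have hcard : (Finset.Icc (-(N : ℤ)) N).card = 2 * N + 1 := by
    rw [Int.card_Icc]; omega
  have hNle : (N : ℝ) ≤ M * A + 1 := (Nat.ceil_lt_add_one (by positivity)).le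
  calc _ ≤ ∑ j ∈ Finset.Icc (-(N : ℤ)) N, volume (Icc ((j - c) / A) ((j + c) / A)) :=
        (measure_mono hcover).trans (measure_biUnion_finset_le _ _)
    _ = ∑ _j ∈ Finset.Icc (-(N : ℤ)) N, ENNReal.ofReal (2 * c / A) :=
        Finset.sum_congr rfl fun j _ => by rw [Real.volume_Icc]; congr 1; ring
    _ = ENNReal.ofReal ((2 * N + 1) * (2 * c / A)) := by
        rw [Finset.sum_const, hcard, nsmul_eq_mul, ← ENNReal.ofReal_natCast,
          ← ENNReal.ofReal_mul (by positivity)]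
        push_cast
        rfl
    _ ≤ ENNReal.ofReal ((4 * M + 6) * c) := by
        refine ENNReal.ofReal_le_ofReal ?_
        rw [mul_div_assoc', div_le_iff₀ hA0]
        nlinarith [mul_le_mul_of_nonneg_right hNle hc]

theorem ENNReal.eq_zero_of_forall_le_ofReal_mul {x : ℝ≥0∞} {K ε : ℝ} (hε : 0 < ε)
    (hx : ∀ c ∈ Ioo 0 ε, x ≤ ENNReal.ofReal (K * c)) : x = 0 := by
  have hlim : Tendsto (fun c => ENNReal.ofReal (K * c)) (𝓝 0) (𝓝 0) :=
    (ENNReal.continuous_ofReal.comp (continuous_const_mul K)).tendsto' 0 0 (by simp)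
  exact nonpos_iff_eq_zero.mp <|
    ge_of_tendsto (hlim.mono_left nhdsWithin_le_nhds) (eventually_of_mem (Ioo_mem_nhdsGT hε) hx)

theorem volume_setOf_summable_div_inter_Icc_le {p a : ℕ → ℝ} (hp : ∀ k, 0 ≤ p k)
    (hdiv : ¬ Summable fun k => 1 / p k) (hainf : Tendsto a atTop atTop) {h : ℝ → ℝ}
    {c m : ℝ} (hc : 0 < c) (hm : 0 < m) (hmh : ∀ t ∈ Icc c (1 - c), m ≤ h t) {M : ℝ} (hM : 0 ≤ M) :
    volume ({t | Summable fun k => h (Int.fract (t * a k)) / p k} ∩ Icc (-M) M) ≤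
      ENNReal.ofReal ((4 * M + 6) * c) := by
  set G : ℕ → Set ℝ := fun k => {t | Int.fract (t * a k) ∈ Icc c (1 - c)}
  set w : ℕ → ℝ≥0 := fun k => (1 / p k).toNNReal
  have hG : ∀ k, MeasurableSet (G k) := fun k =>
    (measurable_fract.comp (measurable_id.mul_const (a k))) measurableSet_Icc
  have hw : ¬ Summable w := fun hs => hdiv <| (NNReal.summable_coe.mpr hs).congr fun k =>
    Real.coe_toNNReal _ (one_div_nonneg.mpr (hp k))
  have hB : ∀ᶠ k in atTop, volume (Icc (-M) M \ G k) ≤ ENNReal.ofReal ((4 * M + 6) * c) :=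
    (hainf.eventually_ge_atTop 1).mono fun k hk =>
      volume_Icc_diff_setOf_fract_mul_mem_Icc_le hM hk hc.le
  have hsub : {t | Summable fun k => h (Int.fract (t * a k)) / p k} ∩ Icc (-M) M ⊆
      Icc (-M) M ∩ {t | Summable fun k => (G k).indicator (fun _ => w k) t} := by
    rintro t ⟨hS, hI⟩
    refine ⟨hI, NNReal.summable_of_le (fun k => ?_) (hS.div_const m).toNNReal⟩
    by_cases hk : t ∈ G k
    · rw [indicator_of_mem hk]
      refine Real.toNNReal_le_toNNReal ?_
      rw [div_right_comm]
      exact div_le_div_of_nonneg_right ((one_le_div hm).mpr (hmh _ hk)) (hp k)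
    · rw [indicator_of_notMem hk]
      exact zero_le
  exact (measure_mono hsub).trans (measure_inter_setOf_summable_indicator_le hG hw
    measurableSet_Icc measure_Icc_lt_top.ne hB)

theorem stmt8_general
    (p a : ℕ → ℝ) (hp : ∀ k, 0 ≤ p k)
    (hdiv : ¬ Summable (fun k => 1 / p k))
    (hainf : Tendsto a atTop atTop)
    (h : ℝ → ℝ)
    (hmin : ∀ c : ℝ, 0 ≤ c → c < 1/2 →
      (0 < min (h c) (h (1 - c))) ∧
      ∀ t ∈ Set.Icc c (1 - c), min (h c) (h (1 - c)) ≤ h t) :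
    volume {t : ℝ | Summable (fun k => h (Int.fract (t * a k)) / p k)} = 0 := by
  have hlocal : ∀ M : ℕ, volume ({t : ℝ | Summable fun k => h (Int.fract (t * a k)) / p k} ∩
      Icc (-(M : ℝ)) M) = 0 := fun M =>
    ENNReal.eq_zero_of_forall_le_ofReal_mul (by norm_num : (0 : ℝ) < 1 / 2) fun c hc =>
      let ⟨hm, hmh⟩ := hmin c hc.1.le hc.2
      volume_setOf_summable_div_inter_Icc_le hp hdiv hainf hc.1 hm hmh M.cast_nonneg
  refine measure_mono_null (fun t ht => ?_) (measure_iUnion_null hlocal)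
  obtain ⟨M, hM⟩ := exists_nat_ge |t|
  exact mem_iUnion.mpr ⟨M, ht, abs_le.mp hM⟩

theorem stmt8
    (p a : ℕ → ℝ) (hp : ∀ k, 0 ≤ p k) (ha : ∀ k, 0 ≤ a k)
    (hdiv : ¬ Summable (fun k => 1 / p k))
    (hainf : Tendsto a atTop atTop)
    (h : ℝ → ℝ) (hpos : ∀ t ∈ Set.Icc (0:ℝ) 1, 0 < h t)
    (hmin : ∀ c : ℝ, 0 ≤ c → c < 1/2 →
      (0 < min (h c) (h (1 - c))) ∧
      ∀ t ∈ Set.Icc c (1 - c), min (h c) (h (1 - c)) ≤ h t) :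
    volume {t : ℝ | Summable (fun k => h (Int.fract (t * a k)) / p k)} = 0 :=
  stmt8_general p a hp hdiv hainf h hmin
end

section
/- For any real numbers t₁, …, t_k, any ℓ, N₀ ∈ ℕ*, there exist r₀ ≥ 1 and integers q₁ < ⋯ < q_{r₀} with q₁ ≥ 2N₀ such that 1/(2ℓ^k) < ∑_{i=1}^{r₀} 1/q_i < 1/ℓ^k and ‖q_i t_s‖ ≤ √k/ℓ for all 1 ≤ i ≤ r₀ and 1 ≤ s ≤ k, where ‖x‖ denotes the distance from x to the nearest integer. -/
/-- Distance from a real number to the nearest integer. -/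
noncomputable def distToInt (x : ℝ) : ℝ := |x - round x|

/-!
Cut `[0,1)^k` into `ℓ^k` boxes of side `1/ℓ`. Among `0, …, Q-1` some box holds the fractional
parts `({d t₁}, …, {d t_k})` of at least `Q/ℓ^k` integers `d`, and their differences with the least
of them are distinct denominators `d < Q` with `‖d t_s‖ ≤ 1/ℓ`. Hence these denominators have
positive lower density, the `j`-th one is `O(j)`, and their reciprocals have divergent sum. Keeping
only those above `2N₀ + 2ℓ^k`, every reciprocal is below `τ = 1/(2ℓ^k)`, so the first partial
sum exceeding `τ` is still below `2τ = 1/ℓ^k`. Finally `1/ℓ ≤ √k/ℓ`.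
-/

open Finset Filter

lemma distToInt_sub_le_of_floor_mul_fract_eq {x y ℓ : ℝ} (hℓ : 0 < ℓ)
    (h : ⌊ℓ * Int.fract x⌋ = ⌊ℓ * Int.fract y⌋) : distToInt (x - y) ≤ 1 / ℓ := by
  have hclose : |ℓ * Int.fract x - ℓ * Int.fract y| < 1 := Int.abs_sub_lt_one_of_floor_eq_floor h
  calc distToInt (x - y) ≤ |x - y - ((⌊x⌋ - ⌊y⌋ : ℤ) : ℝ)| := round_le _ _
    _ = |Int.fract x - Int.fract y| := by rw [Int.fract, Int.fract]; push_cast; ring_nf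
    _ ≤ 1 / ℓ := by
      rw [← mul_sub, abs_mul, abs_of_pos hℓ] at hclose
      rw [le_div_iff₀ hℓ]
      linarith

lemma div_pow_card_le_count_distToInt_le {ι : Type*} [Fintype ι] (t : ι → ℝ) {ℓ : ℕ}
    [DecidablePred fun d : ℕ => ∀ s, distToInt (d * t s) ≤ 1 / ℓ] (hℓ : 0 < ℓ) (Q : ℕ) :
    Q / ℓ ^ Fintype.card ι ≤ Nat.count (fun d : ℕ => ∀ s, distToInt (d * t s) ≤ 1 / ℓ) Q := by
  classical
  set box : ℕ → ι → ℤ := fun d s => ⌊ℓ * Int.fract (d * t s)⌋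
  set boxes := Fintype.piFinset fun _ : ι => Ico (0 : ℤ) ℓ
  have hmaps : ∀ d ∈ range Q, box d ∈ boxes := fun d _ => Fintype.mem_piFinset.2 fun s =>
    mem_Ico.2 ⟨Int.floor_nonneg.2 (by positivity), Int.floor_lt.2 (by
      push_cast
      nlinarith [Int.fract_lt_one ((d : ℝ) * t s), (by exact_mod_cast hℓ : (0 : ℝ) < ℓ)])⟩
  have hcard : #boxes * (Q / ℓ ^ Fintype.card ι) ≤ #(range Q) := by
    simpa [boxes] using Nat.mul_div_le Q (ℓ ^ Fintype.card ι)
  have hne : boxes.Nonempty := ⟨fun _ => 0, Fintype.mem_piFinset.2 fun _ => by simpa using hℓ⟩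
  obtain ⟨y, -, hy⟩ := exists_le_card_fiber_of_mul_le_card_of_maps_to hmaps hne hcard
  set F := {d ∈ range Q | box d = y}
  refine hy.trans ?_
  obtain hF | hF := F.eq_empty_or_nonempty
  · simp [hF]
  rw [Nat.count_eq_card_filter_range]
  refine card_le_card_of_injOn (· - F.min' hF) (fun d hd => ?_) (fun a ha b hb hab => ?_)
  · have hle := F.min'_le d hd
    obtain ⟨hdQ, hdy⟩ := mem_filter.1 hd
    obtain ⟨-, hmy⟩ := mem_filter.1 (F.min'_mem hF)
    refine mem_filter.2 ⟨mem_range.2 ((Nat.sub_le _ _).trans_lt (mem_range.1 hdQ)), fun s => ?_⟩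
    rw [Nat.cast_sub hle, sub_mul]
    exact distToInt_sub_le_of_floor_mul_fract_eq (by exact_mod_cast hℓ)
      (congrFun (hdy.trans hmy.symm) s)
  · have := F.min'_le a ha
    have := F.min'_le b hb
    simp only at hab
    omega

lemma Nat.count_le_count_and_le_add (p : ℕ → Prop) [DecidablePred p] (B Q : ℕ) :
    Nat.count p Q ≤ Nat.count (fun d => B ≤ d ∧ p d) Q + B := by
  simp only [Nat.count_eq_card_filter_range]
  calc #{d ∈ range Q | p d} ≤ #({d ∈ range Q | B ≤ d ∧ p d} ∪ range B) := by
        refine card_le_card fun d hd => ?_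
        by_cases hB : B ≤ d
        · exact mem_union_left _ (by simp_all)
        · exact mem_union_right _ (mem_range.2 (not_le.1 hB))
    _ ≤ #{d ∈ range Q | B ≤ d ∧ p d} + B := by simpa using card_union_le _ (range B)

section Density

variable {p : ℕ → Prop} [DecidablePred p] {L c : ℕ}

lemma Nat.infinite_of_div_le_count_add (hL : 0 < L) (h : ∀ Q, Q / L ≤ Nat.count p Q + c) :
    (Set.ofPred p).Infinite := by
  intro hfin
  have hQ := h (L * (#hfin.toFinset + c + 1))
  rw [Nat.mul_div_cancel_left _ hL] at hQ
  have := Nat.count_le_card hfin (L * (#hfin.toFinset + c + 1))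
  omega

lemma Nat.nth_lt_of_div_le_count_add (hL : 0 < L) (h : ∀ Q, Q / L ≤ Nat.count p Q + c) (j : ℕ) :
    Nat.nth p j < L * (j + c + 1) := by
  have hj := h (Nat.nth p j)
  rw [Nat.count_nth_of_infinite (Nat.infinite_of_div_le_count_add hL h)] at hj
  rw [mul_comm]
  exact (Nat.div_lt_iff_lt_mul hL).1 (by omega)

end Density

lemma tendsto_sum_range_one_div_atTop_of_le_mul {a : ℕ → ℕ} {C : ℕ} (hpos : ∀ j, 0 < a j)
    (h : ∀ j, a j ≤ C * (j + 1)) :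
    Tendsto (fun m => ∑ j ∈ range m, (1 : ℝ) / a j) atTop atTop := by
  have hC : (0 : ℝ) < C := by exact_mod_cast (hpos 0).trans_le ((h 0).trans_eq (by ring))
  refine tendsto_atTop_mono (fun m => ?_)
    (Real.tendsto_sum_range_one_div_nat_succ_atTop.const_mul_atTop (inv_pos.2 hC))
  rw [mul_sum]
  refine sum_le_sum fun j _ => ?_
  rw [← one_div, one_div_mul_one_div]
  exact one_div_le_one_div_of_le (by exact_mod_cast hpos j) (by exact_mod_cast h j)

lemma exists_sum_range_mem_Ioo {f : ℕ → ℝ} {τ : ℝ} (hτ : 0 ≤ τ) (hf : ∀ j, f j < τ)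
    (hdiv : Tendsto (fun m => ∑ j ∈ range m, f j) atTop atTop) :
    ∃ m, 0 < m ∧ τ < ∑ j ∈ range m, f j ∧ ∑ j ∈ range m, f j < 2 * τ := by
  classical
  have hex : ∃ m, τ < ∑ j ∈ range m, f j := (hdiv.eventually_gt_atTop τ).exists
  have hpos : 0 < Nat.find hex := Nat.pos_of_ne_zero fun h0 => by
    simpa [h0] using hτ.trans_lt (Nat.find_spec hex)
  obtain ⟨m, hm⟩ := Nat.exists_eq_add_one_of_ne_zero hpos.ne'
  have hprev : ∑ j ∈ range m, f j ≤ τ := not_lt.1 (Nat.find_min hex (by omega))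
  refine ⟨m + 1, m.succ_pos, hm ▸ Nat.find_spec hex, ?_⟩
  rw [sum_range_succ]
  linarith [hf m]

theorem stmt9_general (k : ℕ) (t : Fin k → ℝ) (ℓ N₀ : ℕ) (hℓ : 0 < ℓ) :
    ∃ (r₀ : ℕ) (q : Fin r₀ → ℕ), 1 ≤ r₀ ∧ StrictMono q ∧
      (∀ i, 2 * N₀ ≤ q i) ∧
      (1 / (2 * (ℓ : ℝ) ^ k) < ∑ i, (1 : ℝ) / q i) ∧
      (∑ i, (1 : ℝ) / q i < 1 / (ℓ : ℝ) ^ k) ∧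
      ∀ (i : Fin r₀) (s : Fin k), distToInt ((q i : ℝ) * t s) ≤ Real.sqrt k / ℓ := by
  have hL : 0 < ℓ ^ k := pow_pos hℓ k
  set B := 2 * N₀ + 2 * ℓ ^ k + 1
  set p : ℕ → Prop := fun d => B ≤ d ∧ ∀ s, distToInt (d * t s) ≤ 1 / ℓ
  have hcount (Q : ℕ) : Q / ℓ ^ k ≤ Nat.count p Q + B := by
    have h := div_pow_card_le_count_distToInt_le t hℓ Q
    rw [Fintype.card_fin] at h
    exact h.trans (Nat.count_le_count_and_le_add _ B Q)
  have hinf := Nat.infinite_of_div_le_count_add hL hcount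
  have hp := Nat.nth_mem_of_infinite hinf
  have hgrowth (j : ℕ) : Nat.nth p j ≤ ℓ ^ k * (B + 1) * (j + 1) :=
    (Nat.nth_lt_of_div_le_count_add hL hcount j).le.trans (by rw [mul_assoc]; gcongr; nlinarith)
  have hterm (j : ℕ) : (1 : ℝ) / Nat.nth p j < 1 / (2 * (ℓ : ℝ) ^ k) :=
    one_div_lt_one_div_of_lt (by positivity)
      (by exact_mod_cast (by omega : 2 * ℓ ^ k < B).trans_le (hp j).1)
  obtain ⟨m, hm, hlow, hup⟩ := exists_sum_range_mem_Ioo (by positivity) hterm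
    (tendsto_sum_range_one_div_atTop_of_le_mul (fun j => by have := (hp j).1; omega) hgrowth)
  refine ⟨m, fun i => Nat.nth p i, hm, fun i j hij => ?_, fun i => ?_, ?_, ?_, fun i s => ?_⟩
  · exact Nat.nth_strictMono hinf hij
  · exact (by omega : 2 * N₀ ≤ B).trans (hp i).1
  · rwa [Fin.sum_univ_eq_sum_range (fun j => (1 : ℝ) / Nat.nth p j)]
  · rw [Fin.sum_univ_eq_sum_range (fun j => (1 : ℝ) / Nat.nth p j)]
    calc _ < 2 * (1 / (2 * (ℓ : ℝ) ^ k)) := hup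
      _ = 1 / (ℓ : ℝ) ^ k := by field_simp
  · have hk : (1 : ℝ) ≤ k := by exact_mod_cast s.pos
    calc distToInt ((Nat.nth p i : ℝ) * t s) ≤ 1 / ℓ := (hp i).2 s
      _ ≤ Real.sqrt k / ℓ := by gcongr; exact Real.one_le_sqrt.2 hk

theorem stmt9 (k : ℕ) (hk : 0 < k) (t : Fin k → ℝ) (ℓ N₀ : ℕ) (hℓ : 0 < ℓ)
    (hN₀ : 0 < N₀) :
    ∃ (r₀ : ℕ) (q : Fin r₀ → ℕ), 1 ≤ r₀ ∧ StrictMono q ∧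
      (∀ i, 2 * N₀ ≤ q i) ∧
      (1 / (2 * (ℓ : ℝ) ^ k) < ∑ i, (1 : ℝ) / q i) ∧
      (∑ i, (1 : ℝ) / q i < 1 / (ℓ : ℝ) ^ k) ∧
      ∀ (i : Fin r₀) (s : Fin k), distToInt ((q i : ℝ) * t s) ≤ Real.sqrt k / ℓ :=
  stmt9_general k t ℓ N₀ hℓ
end

section
/- For any real numbers t₁, …, t_k and any ℓ, N₀ ∈ ℕ*, there exist r ≥ 1 and integers q₁ < ⋯ < q_r with q₁ ≥ 2N₀ such that 1/(2ℓ) < ∑_{i=1}^{r} 1/q_i < 1/ℓ and ‖q_i t_s‖ ≤ √k/ℓ for all 1 ≤ i ≤ r and 1 ≤ s ≤ k. -/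
open Finset

lemma distToInt_le_abs_sub (y : ℝ) (m : ℤ) : distToInt y ≤ |y - m| := round_le y m

/-- One pigeonhole block: a set of denominators all ≥ L with reciprocal sum > 1/(2ℓ^k). -/
lemma block (k ℓ : ℕ) (hℓ : 0 < ℓ) (t : Fin k → ℝ) (L : ℕ) (hL : 0 < L) :
    ∃ S : Finset ℕ, (∀ q ∈ S, L ≤ q) ∧
      (∀ q ∈ S, ∀ s, distToInt ((q : ℝ) * t s) ≤ 1 / (ℓ : ℝ)) ∧
      (1 : ℝ) / (2 * (ℓ : ℝ) ^ k) < ∑ q ∈ S, (1 : ℝ) / q := by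
  classical
  haveI : NeZero ℓ := ⟨hℓ.ne'⟩
  set N : ℕ := ℓ ^ k * (2 * L + 2) with hN
  have hℓR : (0 : ℝ) < (ℓ : ℝ) := by exact_mod_cast hℓ
  have hfr : ∀ n : ℕ, ∀ s : Fin k, (0:ℝ) ≤ (ℓ : ℝ) * Int.fract ((n : ℝ) * t s) :=
    fun n s => mul_nonneg hℓR.le (Int.fract_nonneg _)
  -- box map
  have hfl : ∀ n : ℕ, ∀ s : Fin k, (⌊(ℓ : ℝ) * Int.fract ((n : ℝ) * t s)⌋).toNat < ℓ := by
    intro n s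
    have h0 : 0 ≤ ⌊(ℓ : ℝ) * Int.fract ((n : ℝ) * t s)⌋ :=
      Int.floor_nonneg.mpr (hfr n s)
    have h1 : ⌊(ℓ : ℝ) * Int.fract ((n : ℝ) * t s)⌋ < (ℓ : ℤ) := by
      apply Int.floor_lt.mpr
      have := Int.fract_lt_one ((n : ℝ) * t s)
      push_cast
      nlinarith
    omega
  set f : ℕ → (Fin k → Fin ℓ) := fun n s => ⟨(⌊(ℓ : ℝ) * Int.fract ((n : ℝ) * t s)⌋).toNat, hfl n s⟩
    with hf
  haveI : Nonempty (Fin ℓ) := ⟨⟨0, hℓ⟩⟩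
  obtain ⟨y, -, hy⟩ := Finset.exists_le_card_fiber_of_mul_le_card_of_maps_to
    (s := Finset.range N) (t := Finset.univ) (f := f) (n := 2 * L + 2) (fun a _ => mem_univ _)
    univ_nonempty
    (by
      rw [Finset.card_univ, Finset.card_range]
      simp [hN, Fintype.card_fun])
  set F : Finset ℕ := (Finset.range N).filter (fun a => f a = y) with hF
  have hFne : F.Nonempty := Finset.card_pos.mp (by omega)
  set a := F.min' hFne with ha
  have haF : a ∈ F := F.min'_mem hFne
  set G : Finset ℕ := F.filter (fun x => a + L ≤ x) with hG
  -- card of G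
  have hsplit := Finset.card_filter_add_card_filter_not
    (s := F) (p := fun x => a + L ≤ x)
  have hsub : F.filter (fun x => ¬ (a + L ≤ x)) ⊆ Finset.Ico a (a + L) := by
    intro x hx
    simp only [Finset.mem_filter, not_le] at hx
    exact Finset.mem_Ico.mpr ⟨F.min'_le x hx.1, hx.2⟩
  have hGcard : L + 2 ≤ G.card := by
    have h1 : (F.filter (fun x => ¬ (a + L ≤ x))).card ≤ L := by
      have := Finset.card_le_card hsub
      rw [Nat.card_Ico, Nat.add_sub_cancel_left] at this
      exact this
    have h2 : G.card + (F.filter (fun x => ¬ (a + L ≤ x))).card = F.card := by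
      rw [hG]; exact hsplit
    omega
  set S : Finset ℕ := G.image (fun x => x - a) with hS
  have hScard : S.card = G.card := by
    apply Finset.card_image_of_injOn
    intro x hx z hz hxz
    have h1 : a + L ≤ x := (Finset.mem_filter.mp (Finset.mem_coe.mp hx)).2
    have h2 : a + L ≤ z := (Finset.mem_filter.mp (Finset.mem_coe.mp hz)).2
    have h3 : x - a = z - a := hxz
    omega
  -- membership facts
  have hmemS : ∀ q ∈ S, L ≤ q ∧ q < N ∧ ∃ x ∈ F, q = x - a ∧ a + L ≤ x := by
    intro q hq
    simp only [hS, Finset.mem_image] at hq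
    obtain ⟨x, hx, rfl⟩ := hq
    simp only [hG, Finset.mem_filter] at hx
    have hxN : x < N := by
      have := hx.1
      simp only [hF, Finset.mem_filter, Finset.mem_range] at this
      exact this.1
    exact ⟨by omega, by omega, x, hx.1, rfl, hx.2⟩
  refine ⟨S, fun q hq => (hmemS q hq).1, ?_, ?_⟩
  · -- distance bound
    intro q hq s
    obtain ⟨-, -, x, hxF, rfl, hax⟩ := hmemS q hq
    have hfx : f x = y := (Finset.mem_filter.mp hxF).2
    have hfa : f a = y := (Finset.mem_filter.mp haF).2
    have hfs : (⌊(ℓ : ℝ) * Int.fract ((x : ℝ) * t s)⌋).toNat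
        = (⌊(ℓ : ℝ) * Int.fract ((a : ℝ) * t s)⌋).toNat := by
      have := congrArg (fun g => (g s : ℕ)) (hfx.trans hfa.symm)
      simpa [hf] using this
    have hfloor : ⌊(ℓ : ℝ) * Int.fract ((x : ℝ) * t s)⌋
        = ⌊(ℓ : ℝ) * Int.fract ((a : ℝ) * t s)⌋ := by
      have h0x : 0 ≤ ⌊(ℓ : ℝ) * Int.fract ((x : ℝ) * t s)⌋ :=
        Int.floor_nonneg.mpr (hfr x s)
      have h0a : 0 ≤ ⌊(ℓ : ℝ) * Int.fract ((a : ℝ) * t s)⌋ :=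
        Int.floor_nonneg.mpr (hfr a s)
      omega
    -- fract closeness
    have hclose : |Int.fract ((x : ℝ) * t s) - Int.fract ((a : ℝ) * t s)| < 1 / (ℓ : ℝ) := by
      set c := ⌊(ℓ : ℝ) * Int.fract ((x : ℝ) * t s)⌋
      have h1 := Int.floor_le ((ℓ : ℝ) * Int.fract ((x : ℝ) * t s))
      have h2 := Int.lt_floor_add_one ((ℓ : ℝ) * Int.fract ((x : ℝ) * t s))
      have h3 := Int.floor_le ((ℓ : ℝ) * Int.fract ((a : ℝ) * t s))
      have h4 := Int.lt_floor_add_one ((ℓ : ℝ) * Int.fract ((a : ℝ) * t s))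
      rw [← hfloor] at h3 h4
      have hmul : (1 / (ℓ : ℝ)) * ℓ = 1 := one_div_mul_cancel hℓR.ne'
      rw [abs_lt]
      constructor <;> nlinarith
    have hcast : ((x - a : ℕ) : ℝ) = (x : ℝ) - (a : ℝ) := by
      have : a ≤ x := by omega
      push_cast [this]; ring
    have key : ((x - a : ℕ) : ℝ) * t s - ((⌊(x : ℝ) * t s⌋ - ⌊(a : ℝ) * t s⌋ : ℤ) : ℝ)
        = Int.fract ((x : ℝ) * t s) - Int.fract ((a : ℝ) * t s) := by
      rw [hcast, Int.fract, Int.fract]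
      push_cast
      ring
    calc distToInt (((x - a : ℕ) : ℝ) * t s)
        ≤ |((x - a : ℕ) : ℝ) * t s - ((⌊(x : ℝ) * t s⌋ - ⌊(a : ℝ) * t s⌋ : ℤ) : ℝ)| :=
          distToInt_le_abs_sub _ _
      _ = |Int.fract ((x : ℝ) * t s) - Int.fract ((a : ℝ) * t s)| := by rw [key]
      _ ≤ 1 / (ℓ : ℝ) := hclose.le
  · -- sum lower bound
    have hNpos : 0 < N := by positivity
    have hterm : ∀ q ∈ S, (1 : ℝ) / N ≤ 1 / q := by
      intro q hq
      obtain ⟨h1, h2, -⟩ := hmemS q hq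
      apply one_div_le_one_div_of_le
      · exact_mod_cast (by omega : 0 < q)
      · exact_mod_cast h2.le
    have hsum : (S.card : ℝ) * (1 / N) ≤ ∑ q ∈ S, (1 : ℝ) / q := by
      calc (S.card : ℝ) * (1 / N) = ∑ _q ∈ S, (1 : ℝ) / N := by
            rw [Finset.sum_const, nsmul_eq_mul]
        _ ≤ ∑ q ∈ S, (1 : ℝ) / q := Finset.sum_le_sum hterm
    have hcard : (L + 2 : ℝ) ≤ (S.card : ℝ) := by exact_mod_cast hScard ▸ hGcard
    have hNR : (N : ℝ) = (ℓ : ℝ) ^ k * (2 * L + 2) := by push_cast [hN]; ring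
    have hlk : (0 : ℝ) < (ℓ : ℝ) ^ k := by positivity
    have : (1 : ℝ) / (2 * (ℓ : ℝ) ^ k) < (L + 2 : ℝ) * (1 / N) := by
      rw [mul_one_div, div_lt_div_iff₀ (by positivity) (by positivity : (0:ℝ) < (N:ℝ)), hNR]
      nlinarith
    calc (1 : ℝ) / (2 * (ℓ : ℝ) ^ k) < (L + 2 : ℝ) * (1 / N) := this
      _ ≤ (S.card : ℝ) * (1 / N) := by
          apply mul_le_mul_of_nonneg_right hcard
          positivity
      _ ≤ _ := hsum

/-- Concatenating `j` blocks. -/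
lemma concatBlocks (k ℓ : ℕ) (hℓ : 0 < ℓ) (t : Fin k → ℝ) (L₀ : ℕ) (hL₀ : 0 < L₀) (j : ℕ) :
    ∃ T : Finset ℕ, (∀ q ∈ T, L₀ ≤ q) ∧
      (∀ q ∈ T, ∀ s, distToInt ((q : ℝ) * t s) ≤ 1 / (ℓ : ℝ)) ∧
      (j : ℝ) / (2 * (ℓ : ℝ) ^ k) ≤ ∑ q ∈ T, (1 : ℝ) / q := by
  induction j with
  | zero => exact ⟨∅, by simp, by simp, by simp⟩
  | succ j ih =>
    obtain ⟨T, hT1, hT2, hT3⟩ := ih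
    set L := max L₀ (T.sup id + 1) with hLdef
    have hLpos : 0 < L := lt_of_lt_of_le hL₀ (le_max_left _ _)
    obtain ⟨S, hS1, hS2, hS3⟩ := block k ℓ hℓ t L hLpos
    have hdisj : Disjoint T S := by
      rw [Finset.disjoint_left]
      intro q hqT hqS
      have h1 := hS1 q hqS
      have h2 : q ≤ T.sup id := Finset.le_sup (f := id) hqT
      have h3 : T.sup id + 1 ≤ L := le_max_right _ _
      omega
    refine ⟨T ∪ S, ?_, ?_, ?_⟩
    · intro q hq
      rcases Finset.mem_union.mp hq with h | h
      · exact hT1 q h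
      · exact le_trans (le_max_left _ _) (hS1 q h)
    · intro q hq s
      rcases Finset.mem_union.mp hq with h | h
      · exact hT2 q h s
      · exact hS2 q h s
    · rw [Finset.sum_union hdisj]
      push_cast
      have h4 : ((j : ℝ) + 1) / (2 * (ℓ : ℝ) ^ k)
          = (j : ℝ) / (2 * (ℓ : ℝ) ^ k) + 1 / (2 * (ℓ : ℝ) ^ k) := by ring
      rw [h4]
      linarith

/-- Greedy selection of a subset whose reciprocal sum lies in the target window. -/
lemma greedy (ℓ : ℕ) (hℓ : 0 < ℓ) :
    ∀ T : Finset ℕ, (∀ e ∈ T, 2 * ℓ + 1 ≤ e) →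
      1 / (2 * (ℓ : ℝ)) < ∑ e ∈ T, (1 : ℝ) / e →
      ∃ U ⊆ T, 1 / (2 * (ℓ : ℝ)) < ∑ e ∈ U, (1 : ℝ) / e ∧
        ∑ e ∈ U, (1 : ℝ) / e < 1 / (ℓ : ℝ) := by
  intro T
  induction T using Finset.strongInductionOn with
  | _ T ih =>
    intro hel hsum
    have hℓR : (0 : ℝ) < (ℓ : ℝ) := by exact_mod_cast hℓ
    by_cases hlt : ∑ e ∈ T, (1 : ℝ) / e < 1 / (ℓ : ℝ)
    · exact ⟨T, Finset.Subset.refl T, hsum, hlt⟩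
    · push_neg at hlt
      have hne : T.Nonempty := by
        rcases T.eq_empty_or_nonempty with rfl | h
        · exfalso
          simp only [Finset.sum_empty] at hsum
          have : (0 : ℝ) < 1 / (2 * (ℓ : ℝ)) := by positivity
          linarith
        · exact h
      obtain ⟨e, he⟩ := hne
      have hT' : T.erase e ⊂ T := Finset.erase_ssubset he
      have hsum' : ∑ x ∈ T.erase e, (1 : ℝ) / x = ∑ x ∈ T, (1 : ℝ) / x - 1 / e := by
        rw [← Finset.sum_erase_add T _ he]; ring
      have hee : (2 * (ℓ : ℝ) + 1) ≤ (e : ℝ) := by exact_mod_cast hel e he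
      have h1e : (1 : ℝ) / e ≤ 1 / (2 * (ℓ : ℝ) + 1) :=
        one_div_le_one_div_of_le (by positivity) hee
      have hhalf : 1 / (2 * (ℓ : ℝ)) + 1 / (2 * (ℓ : ℝ)) = 1 / (ℓ : ℝ) := by
        field_simp
        norm_num
      have hstep : (1 : ℝ) / (2 * (ℓ : ℝ) + 1) < 1 / (2 * (ℓ : ℝ)) :=
        one_div_lt_one_div_of_lt (by positivity) (by linarith)
      have key : 1 / (2 * (ℓ : ℝ)) < ∑ x ∈ T.erase e, (1 : ℝ) / x := by
        rw [hsum']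
        linarith
      obtain ⟨U, hU, h⟩ := ih _ hT' (fun x hx => hel x (Finset.mem_of_mem_erase hx)) key
      exact ⟨U, hU.trans (Finset.erase_subset _ _), h⟩

theorem stmt10 (k : ℕ) (hk : 0 < k) (t : Fin k → ℝ) (ℓ N₀ : ℕ) (hℓ : 0 < ℓ)
    (hN₀ : 0 < N₀) :
    ∃ (r : ℕ) (q : Fin r → ℕ), 1 ≤ r ∧ StrictMono q ∧
      (∀ i, 2 * N₀ ≤ q i) ∧
      (1 / (2 * (ℓ : ℝ)) < ∑ i, (1 : ℝ) / q i) ∧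
      (∑ i, (1 : ℝ) / q i < 1 / (ℓ : ℝ)) ∧
      ∀ (i : Fin r) (s : Fin k), distToInt ((q i : ℝ) * t s) ≤ Real.sqrt k / ℓ := by
  have hℓR : (0 : ℝ) < (ℓ : ℝ) := by exact_mod_cast hℓ
  set L₀ : ℕ := max (2 * N₀) (2 * ℓ + 1) with hL₀def
  have hL₀ : 0 < L₀ := by omega
  obtain ⟨T, hT1, hT2, hT3⟩ := concatBlocks k ℓ hℓ t L₀ hL₀ (ℓ ^ k + 1)
  have hlk : (0 : ℝ) < (ℓ : ℝ) ^ k := by positivity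
  have hone : (1 : ℝ) ≤ (ℓ : ℝ) := by exact_mod_cast hℓ
  have hTsum : 1 / (2 * (ℓ : ℝ)) < ∑ e ∈ T, (1 : ℝ) / e := by
    refine lt_of_lt_of_le ?_ hT3
    rw [div_lt_div_iff₀ (by positivity) (by positivity)]
    push_cast
    nlinarith [pow_le_pow_left₀ (by linarith : (0:ℝ) ≤ (ℓ:ℝ)) (le_refl (ℓ:ℝ)) k]
  obtain ⟨U, hUT, hU1, hU2⟩ := greedy ℓ hℓ T
    (fun e he => le_trans (le_max_right _ _) (hT1 e he)) hTsum
  have hUne : U.Nonempty := by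
    rcases U.eq_empty_or_nonempty with rfl | h
    · exfalso
      simp only [Finset.sum_empty] at hU1
      have : (0 : ℝ) < 1 / (2 * (ℓ : ℝ)) := by positivity
      linarith
    · exact h
  have hsqrt : (1 : ℝ) ≤ Real.sqrt k := by
    rw [show (1 : ℝ) = Real.sqrt 1 by simp]
    exact Real.sqrt_le_sqrt (by exact_mod_cast hk)
  refine ⟨U.card, fun i => U.orderEmbOfFin rfl i, Finset.card_pos.mpr hUne,
    (U.orderEmbOfFin rfl).strictMono, ?_, ?_, ?_, ?_⟩
  · intro i
    have hm := Finset.orderEmbOfFin_mem U rfl i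
    exact le_trans (le_max_left _ _) (hT1 _ (hUT hm))
  · calc 1 / (2 * (ℓ : ℝ)) < ∑ e ∈ U, (1 : ℝ) / e := hU1
      _ = ∑ i, (1 : ℝ) / (U.orderEmbOfFin rfl i : ℝ) := by
        refine (Finset.sum_bij (fun i _ => U.orderEmbOfFin rfl i) ?_ ?_ ?_ ?_).symm
        · intro i _; exact Finset.orderEmbOfFin_mem U rfl i
        · intro i _ j _ h; exact (U.orderEmbOfFin rfl).injective h
        · intro e heU
          have : e ∈ Set.range (U.orderEmbOfFin rfl) := by
            rw [Finset.range_orderEmbOfFin]; exact heU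
          obtain ⟨i, hi⟩ := this
          exact ⟨i, Finset.mem_univ i, hi⟩
        · intro i _; rfl
  · calc ∑ i, (1 : ℝ) / (U.orderEmbOfFin rfl i : ℝ)
        = ∑ e ∈ U, (1 : ℝ) / e := by
          refine Finset.sum_bij (fun i _ => U.orderEmbOfFin rfl i) ?_ ?_ ?_ ?_
          · intro i _; exact Finset.orderEmbOfFin_mem U rfl i
          · intro i _ j _ h; exact (U.orderEmbOfFin rfl).injective h
          · intro e heU
            have : e ∈ Set.range (U.orderEmbOfFin rfl) := by
              rw [Finset.range_orderEmbOfFin]; exact heU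
            obtain ⟨i, hi⟩ := this
            exact ⟨i, Finset.mem_univ i, hi⟩
          · intro i _; rfl
      _ < 1 / (ℓ : ℝ) := hU2
  · intro i s
    have hm := Finset.orderEmbOfFin_mem U rfl i
    refine le_trans (hT2 _ (hUT hm) s) ?_
    gcongr
end

section
/- For any real numbers t₁, …, t_k, there exist an infinite set A ⊆ ℕ* and a monotonically decreasing sequence ε : A → (0,1) satisfying: n·ε_n → ∞ along A, ε_n → 0 along A, ∑_{n∈A} ε_n²/n < ∞, ∑_{n∈A} ε_n/n = ∞, and ‖n·t_s‖ ≤ ε_n·√k for all n ∈ A and all 1 ≤ s ≤ k. -/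
open Filter

/-!
For every `δ > 0` the times `n` with `‖n t_s‖ ≤ δ` for all `s` have bounded gaps: finitely many
translates of the `δ`-ball by multiples of `(t_s)` cover the (compact) orbit closure of `(t_s)` in
the torus. Hence `∑ 1/n` over these times diverges, and we may cut out consecutive finite blocks
`B_j` of `2^{-(j+1)}`-good times with `∑_{n ∈ B_j} 1/n ∈ [2^{j+1}, 2^{j+1} + 1]`, lying beyond
`j 2^{j+1}`. Put `ε_n = 2^{-(j+1)}` on `B_j`: each block contributes at least `1` to `∑ ε_n / n`,
at most `2^{-j}` to `∑ ε_n² / n`, and `n ε_n ≥ j` on `B_j`.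
-/

open Set Topology Function

def IsSyndetic (S : Set ℕ) : Prop :=
  ∃ C : ℕ, ∀ m : ℕ, ∃ n ∈ S, m < n ∧ n ≤ m + C

theorem IsSyndetic.mono {S T : Set ℕ} (hS : IsSyndetic S) (hST : S ⊆ T) : IsSyndetic T :=
  let ⟨C, hC⟩ := hS
  ⟨C, fun m => let ⟨n, hn, hmn⟩ := hC m; ⟨n, hST hn, hmn⟩⟩

theorem isSyndetic_setOf_nsmul_mem {G : Type*} [AddGroup G] [TopologicalSpace G]
    [IsTopologicalAddGroup G] [CompactSpace G] (x : G) {U : Set G} (hU : IsOpen U)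
    (h0 : (0 : G) ∈ U) : IsSyndetic {n : ℕ | n • x ∈ U} := by
  set H := (AddSubgroup.zmultiples x).topologicalClosure
  have hcover : (H : Set G) ⊆ ⋃ n : ℤ, (· + n • x) ⁻¹' U := by
    intro g hg
    have hg' : -g ∈ closure (AddSubgroup.zmultiples x : Set G) := H.neg_mem hg
    obtain ⟨_, hV, n, rfl⟩ := mem_closure_iff.mp hg' ((g + ·) ⁻¹' U)
      (hU.preimage (continuous_const_add g)) (by simpa using h0)
    exact mem_iUnion.mpr ⟨n, hV⟩
  obtain ⟨F, hF⟩ := (AddSubgroup.isClosed_topologicalClosure _).isCompact.elim_finite_subcover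
    _ (fun n => hU.preimage (continuous_add_const _)) hcover
  set N := F.sup Int.natAbs
  refine ⟨2 * N + 1, fun m => ?_⟩
  have hmem : ((m + N + 1 : ℤ) • x) ∈ H :=
    AddSubgroup.le_topologicalClosure _ (AddSubgroup.zsmul_mem_zmultiples x _)
  obtain ⟨n, hnF, hn⟩ := mem_iUnion₂.mp (hF hmem)
  have hnN : n.natAbs ≤ N := Finset.le_sup hnF
  refine ⟨(m + N + 1 + n).toNat, ?_, by omega, by omega⟩
  rw [mem_ofPred_eq, ← natCast_zsmul, Int.toNat_of_nonneg (by omega), add_zsmul]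
  exact hn

theorem distToInt_eq_norm (x : ℝ) : distToInt x = ‖(x : UnitAddCircle)‖ :=
  UnitAddCircle.norm_eq.symm

theorem isSyndetic_setOf_distToInt_le {k : ℕ} (t : Fin k → ℝ) {δ : ℝ} (hδ : 0 < δ) :
    IsSyndetic {n : ℕ | ∀ s, distToInt (n * t s) ≤ δ} := by
  refine (isSyndetic_setOf_nsmul_mem (fun s => (t s : UnitAddCircle)) Metric.isOpen_ball
    (Metric.mem_ball_self hδ)).mono fun n hn s => ?_
  rw [mem_ofPred_eq, mem_ball_zero_iff] at hn
  rw [distToInt_eq_norm, ← nsmul_eq_mul, AddCircle.coe_nsmul]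
  exact (norm_le_pi_norm _ s).trans hn.le

theorem IsSyndetic.not_summable_indicator_inv {S : Set ℕ} (hS : IsSyndetic S) :
    ¬ Summable (S.indicator fun n : ℕ => (n : ℝ)⁻¹) := by
  obtain ⟨C, hC⟩ := hS
  choose φ hφS hφ using fun r => hC (r * C)
  have hφ_le (r : ℕ) : φ r ≤ (r + 1) * C := by rw [add_mul, one_mul]; exact (hφ r).2
  have hφ_mono : StrictMono φ := strictMono_nat_of_lt_succ fun r =>
    (hφ_le r).trans_lt (hφ (r + 1)).1
  intro hsum
  have hharm : Summable fun r : ℕ => ((r + 1 : ℕ) : ℝ)⁻¹ := by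
    refine ((hsum.comp_injective hφ_mono.injective).mul_left (C : ℝ)).of_nonneg_of_le
      (fun r => by positivity) fun r => ?_
    have hpos : (0 : ℝ) < φ r := Nat.cast_pos.mpr (by have := (hφ r).1; omega)
    rw [comp_apply, indicator_of_mem (hφS r), ← div_eq_mul_inv, le_div_iff₀ hpos]
    calc ((r + 1 : ℕ) : ℝ)⁻¹ * φ r ≤ ((r + 1 : ℕ) : ℝ)⁻¹ * ((r + 1 : ℕ) * C) := by
          gcongr; exact_mod_cast hφ_le r
      _ = C := by field_simp
  exact Real.not_summable_natCast_inv ((summable_nat_add_iff 1).mp hharm)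

theorem exists_apply_mem_Icc_of_step_le {f : ℕ → ℝ} {L d : ℝ} (h0 : f 0 < L)
    (hstep : ∀ M, f (M + 1) ≤ f M + d) (hL : ∃ M, L ≤ f M) :
    ∃ M, f M ∈ Icc L (L + d) := by
  classical
  refine ⟨Nat.find hL, Nat.find_spec hL, ?_⟩
  have hne : Nat.find hL ≠ 0 := fun h => (h ▸ Nat.find_spec hL : L ≤ f 0).not_gt h0
  obtain ⟨M, hM⟩ := Nat.exists_eq_add_one_of_ne_zero hne
  have hfM : f M < L := not_le.mp (Nat.find_min hL (by omega))
  rw [hM]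
  linarith [hstep M]

theorem exists_sum_Ico_mem_Icc {f : ℕ → ℝ} (hf0 : 0 ≤ f) (hf1 : f ≤ 1) (hf : ¬ Summable f)
    (a : ℕ) {L : ℝ} (hL : 0 < L) :
    ∃ M, ∑ n ∈ Finset.Ico a (a + M), f n ∈ Icc L (L + 1) := by
  have htend : Tendsto (fun M => ∑ n ∈ Finset.Ico a (a + M), f n) atTop atTop := by
    have hpartial := ((not_summable_iff_tendsto_nat_atTop_of_nonneg hf0).mp hf).comp
      (tendsto_add_atTop_nat a)
    refine (tendsto_atTop_add_const_right _ (-∑ n ∈ Finset.range a, f n) hpartial).congr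
      fun M => ?_
    rw [comp_apply, Finset.sum_Ico_eq_sub f (Nat.le_add_right _ _), add_comm a M,
      sub_eq_add_neg]
  refine exists_apply_mem_Icc_of_step_le (by simpa using hL) (fun M => ?_)
    (htend.eventually_ge_atTop L).exists
  rw [← add_assoc, Finset.sum_Ico_succ_top (Nat.le_add_right _ _)]
  exact add_le_add_right (hf1 _) _

theorem exists_finset_subset_sum_inv_mem_Icc {S : Set ℕ}
    (hS : ¬ Summable (S.indicator fun n : ℕ => (n : ℝ)⁻¹)) (m : ℕ) {L : ℝ} (hL : 0 < L) :
    ∃ B : Finset ℕ, ↑B ⊆ S ∧ (∀ n ∈ B, m < n) ∧ ∑ n ∈ B, (n : ℝ)⁻¹ ∈ Icc L (L + 1) := by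
  classical
  obtain ⟨M, hM⟩ := exists_sum_Ico_mem_Icc (indicator_nonneg fun n _ => by positivity)
    (fun n => (indicator_le_self' (fun _ _ => by positivity) n).trans (Nat.cast_inv_le_one n))
    hS (m + 1) hL
  refine ⟨(Finset.Ico (m + 1) (m + 1 + M)).filter (· ∈ S),
    fun n hn => (Finset.mem_filter.mp hn).2,
    fun n hn => (Finset.mem_Ico.mp (Finset.mem_filter.mp hn).1).1, ?_⟩
  rwa [Finset.sum_filter]

def IsOrderedBlocks (B : ℕ → Finset ℕ) : Prop :=
  ∀ ⦃i j⦄, i < j → ∀ m ∈ B i, ∀ n ∈ B j, m < n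

theorem exists_isOrderedBlocks_sum_inv_mem_Icc (S : ℕ → Set ℕ)
    (hS : ∀ j, ¬ Summable ((S j).indicator fun n : ℕ => (n : ℝ)⁻¹))
    (L : ℕ → ℝ) (hL : ∀ j, 0 < L j) (b : ℕ → ℝ) :
    ∃ B : ℕ → Finset ℕ, IsOrderedBlocks B ∧ (∀ j, ↑(B j) ⊆ S j) ∧ (∀ j, ∀ n ∈ B j, b j < n) ∧
      ∀ j, ∑ n ∈ B j, (n : ℝ)⁻¹ ∈ Icc (L j) (L j + 1) := by
  choose blk hblk_sub hblk_gt hblk_sum using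
    fun j m => exists_finset_subset_sum_inv_mem_Icc (hS j) m (hL j)
  -- block `j` is `blk j (c j)`, and `c (j + 1)` lies beyond it
  let c : ℕ → ℕ := fun j => Nat.rec ⌈b 0⌉₊
    (fun j cj => max ⌈b (j + 1)⌉₊ (max cj ((blk j cj).sup id))) j
  have hc_succ (j : ℕ) :
      c (j + 1) = max ⌈b (j + 1)⌉₊ (max (c j) ((blk j (c j)).sup id)) := rfl
  have hb_le (j : ℕ) : ⌈b j⌉₊ ≤ c j := by
    cases j with
    | zero => rfl
    | succ j => rw [hc_succ]; exact le_max_left _ _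
  have hc_mono : Monotone c := monotone_nat_of_le_succ fun j => by
    rw [hc_succ]; exact (le_max_left _ _).trans (le_max_right _ _)
  refine ⟨fun j => blk j (c j), fun i j hij m hm n hn => ?_, fun j => hblk_sub _ _,
    fun j n hn => ?_, fun j => hblk_sum _ _⟩
  · calc m ≤ (blk i (c i)).sup id := Finset.le_sup (f := id) hm
      _ ≤ c (i + 1) := by rw [hc_succ]; exact (le_max_right _ _).trans (le_max_right _ _)
      _ ≤ c j := hc_mono hij
      _ < n := hblk_gt _ _ n hn
  · exact (Nat.le_ceil _).trans_lt (by exact_mod_cast (hb_le j).trans_lt (hblk_gt _ _ n hn))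

structure IsAdmissible (A : Set ℕ) (ε : ℕ → ℝ) : Prop where
  mem_Ioo : ∀ n ∈ A, ε n ∈ Set.Ioo (0:ℝ) 1
  tendsto_mul_atTop : Tendsto (fun n : ℕ => (n : ℝ) * ε n) (atTop ⊓ Filter.principal A) atTop
  tendsto_zero : Tendsto ε (atTop ⊓ Filter.principal A) (nhds 0)
  summable_sq_div : Summable (fun n : A => (ε n) ^ 2 / (n : ℝ))
  not_summable_div : ¬ Summable (fun n : A => ε n / (n : ℝ))

theorem IsAdmissible.infinite {A : Set ℕ} {ε : ℕ → ℝ} (h : IsAdmissible A ε) : A.Infinite :=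
  fun hA => h.not_summable_div (haveI := hA.to_subtype; .of_finite)

theorem summable_iUnion_finset_iff_of_nonneg {ι α : Type*} {B : ι → Finset α}
    (hB : Pairwise (Disjoint on fun i => (B i : Set α))) {f : α → ℝ} (hf : 0 ≤ f) :
    Summable (fun x : ⋃ i, (B i : Set α) => f x) ↔ Summable fun i => ∑ x ∈ B i, f x := by
  rw [← (Set.unionEqSigmaOfDisjoint hB).symm.summable_iff]
  refine (summable_sigma_of_nonneg fun _ => hf _).trans
    ((and_iff_right fun _ => .of_finite).trans ?_)
  simp [Finset.sum_attach (B _) f]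

noncomputable def blockIndex (B : ℕ → Finset ℕ) (n : ℕ) : ℕ := sInf {j | n ∈ B j}

namespace IsOrderedBlocks

variable {B : ℕ → Finset ℕ}

theorem blockIndex_eq (hB : IsOrderedBlocks B) {j n : ℕ} (hn : n ∈ B j) :
    blockIndex B n = j := by
  have hmem : n ∈ B (blockIndex B n) := Nat.sInf_mem (s := {j | n ∈ B j}) ⟨j, hn⟩
  rcases lt_trichotomy (blockIndex B n) j with h | h | h
  · exact absurd (hB h n hmem n hn) (lt_irrefl n)
  · exact h
  · exact absurd (hB h n hn n hmem) (lt_irrefl n)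

theorem blockIndex_le_blockIndex (hB : IsOrderedBlocks B) {m n : ℕ}
    (hm : m ∈ ⋃ j, (B j : Set ℕ)) (hn : n ∈ ⋃ j, (B j : Set ℕ)) (hmn : m ≤ n) :
    blockIndex B m ≤ blockIndex B n := by
  obtain ⟨i, hm⟩ := mem_iUnion.mp hm
  obtain ⟨j, hn⟩ := mem_iUnion.mp hn
  rw [hB.blockIndex_eq hm, hB.blockIndex_eq hn]
  by_contra! hji
  exact (hB hji n hn m hm).not_ge hmn

theorem tendsto_blockIndex (hB : IsOrderedBlocks B) :
    Tendsto (blockIndex B) (atTop ⊓ 𝓟 (⋃ j, (B j : Set ℕ))) atTop := by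
  refine tendsto_atTop.mpr fun J => eventually_inf_principal.mpr ?_
  filter_upwards [eventually_gt_atTop (((Finset.range J).biUnion B).sup id)] with n hn hnA
  obtain ⟨j, hj⟩ := mem_iUnion.mp hnA
  rw [hB.blockIndex_eq hj]
  by_contra! hjJ
  exact hn.not_ge
    (Finset.le_sup (f := id) (Finset.mem_biUnion.mpr ⟨j, Finset.mem_range.mpr hjJ, hj⟩))

theorem summable_comp_blockIndex_div_iff (hB : IsOrderedBlocks B) {g : ℕ → ℝ} (hg : 0 ≤ g) :
    Summable (fun n : ⋃ j, (B j : Set ℕ) => g (blockIndex B n) / n) ↔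
      Summable fun j => g j * ∑ n ∈ B j, (n : ℝ)⁻¹ := by
  have hdisj : Pairwise (Disjoint on fun j => (B j : Set ℕ)) := fun i j hij =>
    Set.disjoint_left.mpr fun n hi hj =>
      hij ((hB.blockIndex_eq hi).symm.trans (hB.blockIndex_eq hj))
  rw [summable_iUnion_finset_iff_of_nonneg hdisj (f := fun n => g (blockIndex B n) / n)
    fun n => div_nonneg (hg _) n.cast_nonneg]
  refine summable_congr fun j => ?_
  rw [Finset.mul_sum]
  exact Finset.sum_congr rfl fun n hn => by rw [hB.blockIndex_eq hn, div_eq_mul_inv]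

theorem isAdmissible_comp_blockIndex (hB : IsOrderedBlocks B) {e : ℕ → ℝ}
    (he0 : ∀ j, 0 < e j) (he1 : ∀ j, e j < 1) (he : Summable e)
    (hlow : ∀ j, ∀ n ∈ B j, j / e j < n)
    (hH : ∀ j, ∑ n ∈ B j, (n : ℝ)⁻¹ ∈ Icc (e j)⁻¹ ((e j)⁻¹ + 1)) :
    IsAdmissible (⋃ j, (B j : Set ℕ)) (fun n => e (blockIndex B n)) where
  mem_Ioo _ _ := ⟨he0 _, he1 _⟩
  tendsto_mul_atTop := by
    refine tendsto_atTop_mono' _ (eventually_inf_principal.mpr (.of_forall fun n hn => ?_))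
      (tendsto_natCast_atTop_atTop.comp hB.tendsto_blockIndex)
    obtain ⟨j, hj⟩ := mem_iUnion.mp hn
    show (blockIndex B n : ℝ) ≤ n * e (blockIndex B n)
    rw [hB.blockIndex_eq hj]
    exact ((div_lt_iff₀ (he0 j)).mp (hlow j n hj)).le
  tendsto_zero := he.tendsto_atTop_zero.comp hB.tendsto_blockIndex
  summable_sq_div := by
    refine (hB.summable_comp_blockIndex_div_iff (g := fun j => e j ^ 2) fun j => sq_nonneg _).mpr
      ((he.mul_left 2).of_nonneg_of_le (fun j => by positivity [(he0 j).le]) fun j => ?_)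
    have hej : e j ^ 2 ≤ e j := by nlinarith [he0 j, he1 j]
    calc e j ^ 2 * ∑ n ∈ B j, (n : ℝ)⁻¹ ≤ e j ^ 2 * ((e j)⁻¹ + 1) := by
          gcongr; exact (hH j).2
      _ = e j + e j ^ 2 := by field_simp [(he0 j).ne']
      _ ≤ 2 * e j := by linarith
  not_summable_div := by
    rw [hB.summable_comp_blockIndex_div_iff fun j => (he0 j).le]
    intro hsum
    refine one_ne_zero <| (summable_const_iff (1 : ℝ)).mp <|
      hsum.of_nonneg_of_le (fun _ => zero_le_one) fun j => ?_
    calc (1 : ℝ) = e j * (e j)⁻¹ := (mul_inv_cancel₀ (he0 j).ne').symm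
      _ ≤ e j * ∑ n ∈ B j, (n : ℝ)⁻¹ := mul_le_mul_of_nonneg_left (hH j).1 (he0 j).le

end IsOrderedBlocks

theorem stmt11_general (k : ℕ) (t : Fin k → ℝ) :
    ∃ (A : Set ℕ) (ε : ℕ → ℝ), A.Infinite ∧ (∀ n ∈ A, 0 < n) ∧
      (∀ n ∈ A, ε n ∈ Set.Ioo (0:ℝ) 1) ∧
      (∀ m ∈ A, ∀ n ∈ A, m ≤ n → ε n ≤ ε m) ∧
      Tendsto (fun n : ℕ => (n : ℝ) * ε n) (atTop ⊓ Filter.principal A) atTop ∧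
      Tendsto ε (atTop ⊓ Filter.principal A) (nhds 0) ∧
      Summable (fun n : A => (ε n) ^ 2 / (n : ℝ)) ∧
      ¬ Summable (fun n : A => ε n / (n : ℝ)) ∧
      ∀ n ∈ A, ∀ s : Fin k, distToInt ((n : ℝ) * t s) ≤ ε n * Real.sqrt k := by
  set e : ℕ → ℝ := fun j => 2⁻¹ ^ (j + 1)
  have he0 (j : ℕ) : 0 < e j := by positivity
  have he1 (j : ℕ) : e j < 1 := pow_lt_one₀ (by norm_num) (by norm_num) j.succ_ne_zero
  have he_anti : Antitone e := fun i j hij =>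
    pow_le_pow_of_le_one (by norm_num) (by norm_num) (by omega)
  have he : Summable e :=
    (summable_nat_add_iff 1).mpr (summable_geometric_of_lt_one (by norm_num) (by norm_num))
  obtain ⟨B, hB, hBS, hlow, hH⟩ := exists_isOrderedBlocks_sum_inv_mem_Icc
    (fun j => {n : ℕ | ∀ s, distToInt (n * t s) ≤ e j})
    (fun j => (isSyndetic_setOf_distToInt_le t (he0 j)).not_summable_indicator_inv)
    (fun j => (e j)⁻¹) (fun j => inv_pos.mpr (he0 j)) (fun j => j / e j)
  have hA := hB.isAdmissible_comp_blockIndex he0 he1 he hlow hH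
  refine ⟨_, _, hA.infinite, fun n hn => ?_, hA.mem_Ioo,
    fun m hm n hn hmn => he_anti (hB.blockIndex_le_blockIndex hm hn hmn), hA.tendsto_mul_atTop,
    hA.tendsto_zero, hA.summable_sq_div, hA.not_summable_div, fun n hn s => ?_⟩ <;>
    obtain ⟨j, hj⟩ := mem_iUnion.mp hn
  · exact_mod_cast (div_nonneg j.cast_nonneg (he0 j).le).trans_lt (hlow j n hj)
  · rw [hB.blockIndex_eq hj]
    calc distToInt (n * t s) ≤ e j := hBS j hj s
      _ ≤ e j * √k := le_mul_of_one_le_right (he0 j).le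
        (Real.one_le_sqrt.mpr (Nat.one_le_cast.mpr s.pos))

theorem stmt11 (k : ℕ) (hk : 0 < k) (t : Fin k → ℝ) :
    ∃ (A : Set ℕ) (ε : ℕ → ℝ), A.Infinite ∧ (∀ n ∈ A, 0 < n) ∧
      (∀ n ∈ A, ε n ∈ Set.Ioo (0:ℝ) 1) ∧
      (∀ m ∈ A, ∀ n ∈ A, m ≤ n → ε n ≤ ε m) ∧
      Tendsto (fun n : ℕ => (n : ℝ) * ε n) (atTop ⊓ Filter.principal A) atTop ∧
      Tendsto ε (atTop ⊓ Filter.principal A) (nhds 0) ∧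
      Summable (fun n : A => (ε n) ^ 2 / (n : ℝ)) ∧
      ¬ Summable (fun n : A => ε n / (n : ℝ)) ∧
      ∀ n ∈ A, ∀ s : Fin k, distToInt ((n : ℝ) * t s) ≤ ε n * Real.sqrt k :=
  stmt11_general k t
end

section
/- Let a = {a_n} and b = {b_n} be sequences of positive reals. If ∑_n |1/a_n − 1/b_n| < ∞, then for every t ∈ ℝ, ∑_n sin²(t log a_n)/a_n converges if and only if ∑_n sin²(t log b_n)/b_n converges; in particular the groups G(a) = {t : ∑_n a_n^{−1} sin²((t log a_n)/2) < ∞} and G(b) coincide. -/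
open Real

lemma sinsq_lip (u v : ℝ) : |Real.sin u ^ 2 - Real.sin v ^ 2| ≤ |u - v| := by
  have h : Real.sin u ^ 2 - Real.sin v ^ 2 = Real.sin (u + v) * Real.sin (u - v) := by
    rw [Real.sin_add, Real.sin_sub]
    linear_combination Real.sin v ^ 2 * Real.sin_sq_add_cos_sq u -
      Real.sin u ^ 2 * Real.sin_sq_add_cos_sq v
  rw [h, abs_mul]
  calc |Real.sin (u + v)| * |Real.sin (u - v)| ≤ 1 * |u - v| := by
        apply mul_le_mul ?_ Real.abs_sin_le_abs (abs_nonneg _) zero_le_one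
        exact abs_le.2 ⟨Real.neg_one_le_sin _, Real.sin_le_one _⟩
    _ = |u - v| := one_mul _

lemma key_le (t x y : ℝ) (hx : 0 < x) (hxy : x ≤ y) :
    |Real.sin (t * Real.log x) ^ 2 / x - Real.sin (t * Real.log y) ^ 2 / y| ≤
      (2 * |t| + 1) * |1 / x - 1 / y| := by
  have hy : 0 < y := hx.trans_le hxy
  have h1 : Real.sin (t * Real.log x) ^ 2 / x - Real.sin (t * Real.log y) ^ 2 / y =
      Real.sin (t * Real.log x) ^ 2 * (1 / x - 1 / y) +
      (Real.sin (t * Real.log x) ^ 2 - Real.sin (t * Real.log y) ^ 2) / y := by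
    field_simp; ring
  have habsxy : |1 / x - 1 / y| = (y - x) / (x * y) := by
    rw [abs_of_nonneg]
    · field_simp
    · have := one_div_le_one_div_of_le hx hxy
      linarith
  have hlog : |Real.log x - Real.log y| ≤ (y - x) / x := by
    rw [abs_of_nonpos (by linarith [Real.log_le_log hx hxy]),
      neg_sub]
    have := Real.log_le_sub_one_of_pos (show 0 < y / x from div_pos hy hx)
    rw [Real.log_div hy.ne' hx.ne'] at this
    have : Real.log y - Real.log x ≤ y / x - 1 := this
    have hx' : y / x - 1 = (y - x) / x := by field_simp
    linarith [hx'.symm ▸ this]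
  have hsin2 : |Real.sin (t * Real.log x) ^ 2 - Real.sin (t * Real.log y) ^ 2| ≤
      |t| * ((y - x) / x) := by
    calc _ ≤ |t * Real.log x - t * Real.log y| := sinsq_lip _ _
      _ = |t| * |Real.log x - Real.log y| := by rw [← abs_mul]; ring_nf
      _ ≤ |t| * ((y - x) / x) := by
          exact mul_le_mul_of_nonneg_left hlog (abs_nonneg t)
  rw [h1]
  have hsinle : Real.sin (t * Real.log x) ^ 2 ≤ 1 := by
    nlinarith [Real.neg_one_le_sin (t * Real.log x), Real.sin_le_one (t * Real.log x)]
  calc |Real.sin (t * Real.log x) ^ 2 * (1 / x - 1 / y) +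
      (Real.sin (t * Real.log x) ^ 2 - Real.sin (t * Real.log y) ^ 2) / y|
      ≤ |Real.sin (t * Real.log x) ^ 2 * (1 / x - 1 / y)| +
        |(Real.sin (t * Real.log x) ^ 2 - Real.sin (t * Real.log y) ^ 2) / y| :=
        abs_add_le _ _
    _ ≤ 1 * |1 / x - 1 / y| + (|t| * ((y - x) / x)) / y := by
        have hA : |Real.sin (t * Real.log x) ^ 2 * (1 / x - 1 / y)| ≤ 1 * |1 / x - 1 / y| := by
          rw [abs_mul]
          apply mul_le_mul_of_nonneg_right _ (abs_nonneg _)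
          rw [abs_of_nonneg (sq_nonneg _)]; exact hsinle
        have hB : |(Real.sin (t * Real.log x) ^ 2 - Real.sin (t * Real.log y) ^ 2) / y| ≤
            (|t| * ((y - x) / x)) / y := by
          rw [abs_div, abs_of_pos hy]
          gcongr
        exact add_le_add hA hB
    _ ≤ (2 * |t| + 1) * |1 / x - 1 / y| := by
        rw [habsxy]
        have h2 : |t| * ((y - x) / x) / y = |t| * ((y - x) / (x * y)) := by
          field_simp
        rw [h2]
        have hnn : 0 ≤ (y - x) / (x * y) := div_nonneg (by linarith) (by positivity)
        nlinarith [abs_nonneg t]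

lemma key (t x y : ℝ) (hx : 0 < x) (hy : 0 < y) :
    |Real.sin (t * Real.log x) ^ 2 / x - Real.sin (t * Real.log y) ^ 2 / y| ≤
      (2 * |t| + 1) * |1 / x - 1 / y| := by
  rcases le_total x y with h | h
  · exact key_le t x y hx h
  · rw [abs_sub_comm, abs_sub_comm (1 / x)]
    exact key_le t y x hy h

lemma main_iff (a b : ℕ → ℝ) (ha : ∀ n, 0 < a n) (hb : ∀ n, 0 < b n)
    (hab : Summable (fun n => |1 / a n - 1 / b n|)) (t : ℝ) :
    Summable (fun n => Real.sin (t * Real.log (a n)) ^ 2 / a n) ↔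
      Summable (fun n => Real.sin (t * Real.log (b n)) ^ 2 / b n) := by
  set f : ℕ → ℝ := fun n => Real.sin (t * Real.log (a n)) ^ 2 / a n
  set g : ℕ → ℝ := fun n => Real.sin (t * Real.log (b n)) ^ 2 / b n
  have hdiff : Summable (fun n => f n - g n) := by
    apply Summable.of_abs
    apply Summable.of_nonneg_of_le (fun n => abs_nonneg _)
      (fun n => key t (a n) (b n) (ha n) (hb n))
    exact hab.mul_left _
  constructor
  · intro hf
    have := hf.sub hdiff
    simpa using this
  · intro hg
    have := hdiff.add hg
    simpa using this

theorem stmt13 (a b : ℕ → ℝ) (ha : ∀ n, 0 < a n) (hb : ∀ n, 0 < b n)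
    (hab : Summable (fun n => |1 / a n - 1 / b n|)) :
    (∀ t : ℝ,
      Summable (fun n => Real.sin (t * Real.log (a n)) ^ 2 / a n) ↔
      Summable (fun n => Real.sin (t * Real.log (b n)) ^ 2 / b n)) ∧
    {t : ℝ | Summable (fun n => Real.sin (t * Real.log (a n) / 2) ^ 2 / a n)} =
      {t : ℝ | Summable (fun n => Real.sin (t * Real.log (b n) / 2) ^ 2 / b n)} := by
  refine ⟨fun t => main_iff a b ha hb hab t, ?_⟩
  ext t
  simp only [Set.mem_setOf_eq]
  have h1 : ∀ n, t * Real.log (a n) / 2 = (t / 2) * Real.log (a n) := fun n => by ring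
  have h2 : ∀ n, t * Real.log (b n) / 2 = (t / 2) * Real.log (b n) := fun n => by ring
  simp only [h1, h2]
  exact main_iff a b ha hb hab (t / 2)
end

section
/- For s > 1, the series ∑_{p prime, p ≥ 16} 1/(p·(log log p)^s) converges. -/
/-!
Split the primes into dyadic blocks `2 ^ j ≤ p < 2 ^ (j + 1)`, `j ≥ 4`. Since the product of
the primes up to `n` is at most `4 ^ n`, block `j` holds at most `2 ^ (j + 2) / j` primes, and on
it `log (log p) ≥ log j / 2`. So block `j` contributes `O(1 / (j * (log j) ^ s))`, and these terms
form a convergent Bertrand series by Cauchy condensation.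
-/

open Real Finset

theorem summable_of_sum_fiber_le {ι β : Type*} {f : ι → ℝ} {g : β → ℝ} (key : ι → β)
    (hf : 0 ≤ f) (hg : Summable g)
    (hfiber : ∀ b (u : Finset ι), (∀ i ∈ u, key i = b) → ∑ i ∈ u, f i ≤ g b) :
    Summable f := by
  classical
  have hg0 : ∀ b, 0 ≤ g b := fun b => by simpa using hfiber b ∅ (by simp)
  refine summable_of_sum_le (c := ∑' b, g b) hf fun u => ?_
  calc ∑ i ∈ u, f i = ∑ b ∈ u.image key, ∑ i ∈ u with key i = b, f i :=
        (sum_fiberwise_of_maps_to (fun i hi => mem_image_of_mem key hi) f).symm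
    _ ≤ ∑ b ∈ u.image key, g b :=
        sum_le_sum fun b _ => hfiber b _ fun i hi => (mem_filter.mp hi).2
    _ ≤ ∑' b, g b := hg.sum_le_tsum _ fun b _ => hg0 b

theorem Real.summable_one_div_nat_mul_log_rpow {s : ℝ} (hs : 1 < s) :
    Summable fun n : ℕ => 1 / (n * log n ^ s) := by
  rw [← summable_condensed_iff_of_eventually_nonneg
    (Filter.Eventually.of_forall fun n => by positivity)]
  · have hcond : ∀ k : ℕ, (2 : ℝ) ^ k * (1 / ((2 ^ k : ℕ) * log (2 ^ k : ℕ) ^ s))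
        = (log 2) ^ (-s) * (1 / (k : ℝ) ^ s) := by
      intro k
      rw [Nat.cast_pow, Nat.cast_ofNat, Real.log_pow, mul_rpow (Nat.cast_nonneg k)
        (log_nonneg one_le_two), rpow_neg (log_nonneg one_le_two)]
      field_simp
    simp_rw [hcond]
    exact (summable_one_div_nat_rpow.mpr hs).mul_left _
  · filter_upwards [Filter.eventually_ge_atTop 2] with n hn
    have hn' : (2 : ℝ) ≤ n := by exact_mod_cast hn
    have hlog : 0 < log n := log_pos (by linarith)
    gcongr
    · linarith
    · linarith

theorem Nat.pow_card_le_four_pow_of_primes {v : Finset ℕ} {a n : ℕ}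
    (hv : ∀ p ∈ v, p.Prime ∧ a ≤ p ∧ p ≤ n) : a ^ #v ≤ 4 ^ n := by
  have hsub : v ⊆ {p ∈ range (n + 1) | p.Prime} := fun p hp => by
    simp only [mem_filter, mem_range]
    exact ⟨Nat.lt_succ_of_le (hv p hp).2.2, (hv p hp).1⟩
  calc a ^ #v ≤ ∏ p ∈ v, p := pow_card_le_prod v _ a fun p hp => (hv p hp).2.1
    _ ≤ primorial n := Nat.le_of_dvd (primorial_pos n) (prod_dvd_prod_of_subset _ _ _ hsub)
    _ ≤ 4 ^ n := primorial_le_four_pow n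

theorem Nat.mul_card_le_of_primes_log_eq {v : Finset ℕ} {j : ℕ}
    (hv : ∀ p ∈ v, p.Prime ∧ Nat.log 2 p = j) : j * #v ≤ 2 ^ (j + 2) := by
  have hbounds : ∀ p ∈ v, p.Prime ∧ 2 ^ j ≤ p ∧ p ≤ 2 ^ (j + 1) := fun p hp => by
    obtain ⟨hprime, rfl⟩ := hv p hp
    exact ⟨hprime, pow_log_le_self 2 hprime.ne_zero, (lt_pow_succ_log_self one_lt_two p).le⟩
  have h := pow_card_le_four_pow_of_primes hbounds
  rw [← pow_mul, show (4 : ℕ) = 2 ^ 2 by rfl, ← pow_mul,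
    Nat.pow_le_pow_iff_right one_lt_two] at h
  calc j * #v ≤ 2 * 2 ^ (j + 1) := h
    _ = 2 ^ (j + 2) := by ring

theorem Real.half_log_le_log_log {j : ℕ} {x : ℝ} (hj : 4 ≤ j) (hx : 2 ^ j ≤ x) :
    log j / 2 ≤ log (log x) := by
  have hj' : (4 : ℝ) ≤ j := by exact_mod_cast hj
  have hlog2 := log_two_gt_d9
  have hlogx : j / 2 ≤ log x := calc
    (j : ℝ) / 2 ≤ j * log 2 := by nlinarith
    _ = log (2 ^ j) := (log_pow 2 j).symm
    _ ≤ log x := log_le_log (by positivity) hx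
  have hlogj : 2 * log 2 ≤ log j := calc
    2 * log 2 = log 4 := by rw [show (4 : ℝ) = 2 ^ 2 by norm_num, log_pow, Nat.cast_ofNat]
    _ ≤ log j := log_le_log (by norm_num) hj'
  calc log j / 2 ≤ log j - log 2 := by linarith
    _ = log (j / 2) := (log_div (by positivity) two_ne_zero).symm
    _ ≤ log (log x) := log_le_log (by positivity) hlogx

theorem sum_one_div_mul_log_log_rpow_le_of_log_eq {s : ℝ} (hs : 0 ≤ s) {v : Finset ℕ}
    {j : ℕ} (hj : 4 ≤ j) (hv : ∀ p ∈ v, p.Prime ∧ Nat.log 2 p = j) :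
    ∑ p ∈ v, 1 / ((p : ℝ) * log (log p) ^ s) ≤ 4 * 2 ^ s * (1 / (j * log j ^ s)) := by
  have hj' : (4 : ℝ) ≤ j := by exact_mod_cast hj
  have hlogj : 0 < log j := log_pos (by linarith)
  have hterm : ∀ p ∈ v,
      1 / ((p : ℝ) * log (log p) ^ s) ≤ 1 / (2 ^ j * (log j / 2) ^ s) := by
    intro p hp
    obtain ⟨hprime, rfl⟩ := hv p hp
    have hpow : (2 : ℝ) ^ Nat.log 2 p ≤ p := by
      exact_mod_cast Nat.pow_log_le_self 2 hprime.ne_zero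
    gcongr
    exact half_log_le_log_log hj hpow
  have hcard : ((j * #v : ℕ) : ℝ) ≤ (2 ^ (j + 2) : ℕ) := by
    exact_mod_cast Nat.mul_card_le_of_primes_log_eq hv
  push_cast at hcard
  calc ∑ p ∈ v, 1 / ((p : ℝ) * log (log p) ^ s)
      ≤ #v * (1 / (2 ^ j * (log j / 2) ^ s)) := by
        simpa using sum_le_card_nsmul v _ _ hterm
    _ = 2 ^ s * (#v / 2 ^ j) * (1 / log j ^ s) := by
        rw [div_rpow hlogj.le zero_le_two]
        field_simp
    _ ≤ 2 ^ s * (4 / j) * (1 / log j ^ s) := by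
        gcongr 2 ^ s * ?_ * _
        rw [div_le_div_iff₀ (by positivity) (by positivity)]
        linarith [show (2 : ℝ) ^ (j + 2) = 4 * 2 ^ j by ring]
    _ = 4 * 2 ^ s * (1 / (j * log j ^ s)) := by
        field_simp

theorem stmt15 (s : ℝ) (hs : 1 < s) :
    Summable (fun p : {p : ℕ // p.Prime ∧ 16 ≤ p} =>
      1 / ((p : ℝ) * Real.log (Real.log p) ^ s)) := by
  have hlog : ∀ p : {p : ℕ // p.Prime ∧ 16 ≤ p}, 4 ≤ Nat.log 2 p :=
    fun p => Nat.le_log_of_pow_le one_lt_two p.2.2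
  refine summable_of_sum_fiber_le (fun p => Nat.log 2 p) (fun p => ?_)
    ((summable_one_div_nat_mul_log_rpow hs).mul_left (4 * 2 ^ s)) fun j u hu => ?_
  · have hpow : (2 : ℝ) ^ Nat.log 2 p ≤ p := by
      exact_mod_cast Nat.pow_log_le_self 2 p.2.1.ne_zero
    have hlogp : 0 < log (Nat.log 2 p) :=
      log_pos (by exact_mod_cast (hlog p).trans_lt' (by norm_num))
    have hloglog : 0 < log (log (p : ℝ)) := by
      linarith [half_log_le_log_log (hlog p) hpow]
    positivity
  rcases u.eq_empty_or_nonempty with rfl | ⟨p, hp⟩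
  · have := log_natCast_nonneg j
    simp only [sum_empty]
    positivity
  have hblock := sum_one_div_mul_log_log_rpow_le_of_log_eq
    (v := u.map (Function.Embedding.subtype _)) (by linarith) (hu p hp ▸ hlog p) fun q hq => by
      obtain ⟨q, hqu, rfl⟩ := mem_map.mp hq
      exact ⟨q.2.1, hu q hqu⟩
  rwa [sum_map] at hblock
end

section
/- Let β ∈ (1/2, 1), a > 2 with β·a > a − 1. Then there exist constants c₁, c₂ > 0 such that for every prime p (with n_p the unique positive integer with n_p^a < p ≤ (n_p+1)^a): |1/p^β − 1/n_p^{βa}| ≤ c₂/p^{β+1/a}, and consequently ∑_{p prime} |1/p^β − 1/n_p^{βa}| < ∞. -/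
/-!
Put `s = β a ≥ 1`. Then `n^s < p^β ≤ (n+1)^s`, so the difference is at most
`((n+1)^s - n^s) / (n^s p^β) ≤ s (n+1)^(s-1) / (n^s p^β)`. Since `n + 1 ≥ p^(1/a)` and
`n + 1 ≤ 2n`, this is at most `s 2^s / p^(β + 1/a)`, and `β + 1/a > 1` makes it summable over
the primes.
-/

open Real

lemma rpow_sub_rpow_le_mul_rpow {x y s : ℝ} (hx : 0 ≤ x) (hxy : x ≤ y) (hs : 1 ≤ s) :
    y ^ s - x ^ s ≤ s * y ^ (s - 1) * (y - x) := by
  rcases (hx.trans hxy).eq_or_lt with rfl | hy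
  · simp [le_antisymm hxy hx]
  have hbern := one_add_mul_self_le_rpow_one_add (s := x / y - 1) (by
    linarith [div_nonneg hx hy.le]) hs
  rw [add_sub_cancel, div_rpow hx hy.le, le_div_iff₀ (rpow_pos_of_pos hy s)] at hbern
  have hys : y ^ s = y ^ (s - 1) * y := by rw [rpow_sub_one hy.ne', div_mul_cancel₀ _ hy.ne']
  rw [hys] at hbern ⊢
  have hexpand : (1 + s * (x / y - 1)) * (y ^ (s - 1) * y)
      = y ^ (s - 1) * y + s * y ^ (s - 1) * (x - y) := by
    field_simp
  linarith

theorem abs_one_div_rpow_sub_one_div_rpow_le {a β x n : ℝ} (ha : 0 < a) (hs : 1 ≤ β * a)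
    (hn : 1 ≤ n) (hlow : n ^ a ≤ x) (hhigh : x ≤ (n + 1) ^ a) :
    |1 / x ^ β - 1 / n ^ (β * a)| ≤ β * a * 2 ^ (β * a) / x ^ (β + 1 / a) := by
  set s := β * a
  have hβ : 0 < β := pos_of_mul_pos_left (by linarith) ha.le
  have hn0 : 0 < n := by linarith
  have hx : 0 < x := (rpow_pos_of_pos hn0 a).trans_le hlow
  have hpow_s (m : ℝ) (hm : 0 ≤ m) : m ^ s = (m ^ a) ^ β := by rw [← rpow_mul hm, mul_comm]
  have hy_low : n ^ s ≤ x ^ β := hpow_s n hn0.le ▸ rpow_le_rpow (by positivity) hlow hβ.le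
  have hy_high : x ^ β ≤ (n + 1) ^ s :=
    hpow_s (n + 1) (by linarith) ▸ rpow_le_rpow hx.le hhigh hβ.le
  have hroot : x ^ (1 / a) ≤ n + 1 := by
    simpa [one_div, rpow_rpow_inv (by linarith : (0:ℝ) ≤ n + 1) ha.ne'] using
      rpow_le_rpow hx.le hhigh (by positivity : (0:ℝ) ≤ 1 / a)
  have hnum : x ^ β - n ^ s ≤ s * 2 ^ s * n ^ s / x ^ (1 / a) := calc
    x ^ β - n ^ s ≤ (n + 1) ^ s - n ^ s := by linarith
    _ ≤ s * (n + 1) ^ (s - 1) * (n + 1 - n) := rpow_sub_rpow_le_mul_rpow hn0.le (by linarith) hs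
    _ = s * (n + 1) ^ s / (n + 1) := by rw [rpow_sub_one (by linarith)]; ring
    _ ≤ s * (n + 1) ^ s / x ^ (1 / a) := by gcongr
    _ ≤ s * (2 * n) ^ s / x ^ (1 / a) := by gcongr; linarith
    _ = s * 2 ^ s * n ^ s / x ^ (1 / a) := by rw [mul_rpow zero_le_two hn0.le]; ring
  calc |1 / x ^ β - 1 / n ^ s| = (x ^ β - n ^ s) / (n ^ s * x ^ β) := by
        rw [abs_sub_comm,
          abs_of_nonneg (sub_nonneg.2 (one_div_le_one_div_of_le (by positivity) hy_low))]
        field_simp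
    _ ≤ s * 2 ^ s * n ^ s / x ^ (1 / a) / (n ^ s * x ^ β) := by gcongr
    _ = s * 2 ^ s / x ^ (β + 1 / a) := by
        rw [rpow_add hx]; field_simp

theorem stmt16_general (β a : ℝ) (ha : 2 < a)
    (hβa : a - 1 < β * a) :
    ∃ c₂ : ℝ, 0 < c₂ ∧
      (∀ p : ℕ, p.Prime → ∀ n : ℕ, 0 < n →
        (n : ℝ) ^ a < (p : ℝ) → (p : ℝ) ≤ ((n : ℝ) + 1) ^ a →
        |1 / (p : ℝ) ^ β - 1 / (n : ℝ) ^ (β * a)| ≤ c₂ / (p : ℝ) ^ (β + 1 / a)) ∧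
      ∀ N : {p : ℕ // p.Prime} → ℕ,
        (∀ p : {p : ℕ // p.Prime}, 0 < N p ∧ ((N p : ℝ)) ^ a < ((p : ℕ) : ℝ) ∧
          ((p : ℕ) : ℝ) ≤ ((N p : ℝ) + 1) ^ a) →
        Summable (fun p : {p : ℕ // p.Prime} =>
          |1 / (((p : ℕ) : ℝ)) ^ β - 1 / ((N p : ℝ)) ^ (β * a)|) := by
  have ha0 : 0 < a := by linarith
  have hs : 1 ≤ β * a := by linarith
  have hbound : ∀ p : ℕ, p.Prime → ∀ n : ℕ, 0 < n →
      (n : ℝ) ^ a < (p : ℝ) → (p : ℝ) ≤ ((n : ℝ) + 1) ^ a →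
      |1 / (p : ℝ) ^ β - 1 / (n : ℝ) ^ (β * a)|
        ≤ β * a * 2 ^ (β * a) / (p : ℝ) ^ (β + 1 / a) :=
    fun p _ n hn hlow hhigh =>
      abs_one_div_rpow_sub_one_div_rpow_le ha0 hs (by exact_mod_cast hn) hlow.le hhigh
  refine ⟨β * a * 2 ^ (β * a), by positivity, hbound, fun N hN => ?_⟩
  have hexp : 1 < β + 1 / a := by
    rw [← mul_lt_mul_iff_of_pos_right ha0, add_mul, one_div_mul_cancel ha0.ne']
    linarith
  refine ((Nat.Primes.summable_rpow.mpr (neg_lt_neg hexp)).mul_left (β * a * 2 ^ (β * a)))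
    |>.of_nonneg_of_le (fun _ => abs_nonneg _) fun p => ?_
  obtain ⟨hn, hlow, hhigh⟩ := hN p
  rw [rpow_neg (Nat.cast_nonneg _), ← div_eq_mul_inv]
  exact hbound p p.2 (N p) hn hlow hhigh

theorem stmt16 (β a : ℝ) (hβ : β ∈ Set.Ioo (1/2 : ℝ) 1) (ha : 2 < a)
    (hβa : a - 1 < β * a) :
    ∃ c₂ : ℝ, 0 < c₂ ∧
      (∀ p : ℕ, p.Prime → ∀ n : ℕ, 0 < n →
        (n : ℝ) ^ a < (p : ℝ) → (p : ℝ) ≤ ((n : ℝ) + 1) ^ a →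
        |1 / (p : ℝ) ^ β - 1 / (n : ℝ) ^ (β * a)| ≤ c₂ / (p : ℝ) ^ (β + 1 / a)) ∧
      ∀ N : {p : ℕ // p.Prime} → ℕ,
        (∀ p : {p : ℕ // p.Prime}, 0 < N p ∧ ((N p : ℝ)) ^ a < ((p : ℕ) : ℝ) ∧
          ((p : ℕ) : ℝ) ≤ ((N p : ℝ) + 1) ^ a) →
        Summable (fun p : {p : ℕ // p.Prime} =>
          |1 / (((p : ℕ) : ℝ)) ^ β - 1 / ((N p : ℝ)) ^ (β * a)|) :=
  stmt16_general β a ha hβa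
end
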